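/- arXiv:2207.11188 — 13 statements merged into one kernel-verified Lean document; each statement's English description precedes it below -/
import Mathlib

section
/- Let (s, Δ) be a solution of the plane Hamilton system on [0, ξ̄]. Then for every ξ ∈ [0, ξ̄] one has the energy identity (s(ξ) − 1)²/(2 s(ξ)) + U(Δ(ξ); Z) = ∫₀^ξ v(η) s'(η)/(2 s(η)²) dη. -/
open MeasureTheory intervalIntegral Real Set

/-! Consider the energy `E = (s - 1)²/(2s) + U(Δ; Z)`. Differentiating the potential in `Δ` gives
`K (Ñ(Z + Δ) - Ñ(Z)) = s'`, so along a solution it changes at rate `s' Δ'`, while the kinetic part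
changes at rate `s' (s² - 1)/(2s²)`. Inserting the equation for `Δ'`, everything cancels except
`v s'/(2s²)`; the identity follows by integrating from `0`, where `E` vanishes. -/

theorem hasDerivAt_integral_sub_mul {f : ℝ → ℝ} (hf : Continuous f) (a d : ℝ) :
    HasDerivAt (fun x => ∫ ζ in a..x, (x - ζ) * f ζ) (∫ ζ in a..d, f ζ) d := by
  have hg : Continuous fun ζ => ζ * f ζ := continuous_id.mul hf
  have hsplit : (fun x => ∫ ζ in a..x, (x - ζ) * f ζ)
      = fun x => x * (∫ ζ in a..x, f ζ) - ∫ ζ in a..x, ζ * f ζ := by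
    funext x
    simp only [sub_mul]
    rw [integral_sub (f := fun ζ => x * f ζ) ((continuous_const.mul hf).intervalIntegrable a x)
      (hg.intervalIntegrable a x), intervalIntegral.integral_const_mul]
  have hA : HasDerivAt (fun x => ∫ ζ in a..x, f ζ) (f d) d :=
    integral_hasDerivAt_right (hf.intervalIntegrable a d) (hf.stronglyMeasurableAtFilter _ _)
      hf.continuousAt
  have hB : HasDerivAt (fun x => ∫ ζ in a..x, ζ * f ζ) (d * f d) d :=
    integral_hasDerivAt_right (hg.intervalIntegrable a d) (hg.stronglyMeasurableAtFilter _ _)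
      hg.continuousAt
  rw [hsplit]
  refine (((hasDerivAt_id d).mul hA).sub hB).congr_deriv ?_
  simp only [id]
  ring

theorem integral_comp_add_left_eq_sub {f : ℝ → ℝ} (hf : Continuous f) (Z d : ℝ) :
    ∫ ζ in (0:ℝ)..d, f (Z + ζ) = (∫ ζ in (0:ℝ)..(Z + d), f ζ) - ∫ ζ in (0:ℝ)..Z, f ζ := by
  rw [integral_comp_add_left f Z, add_zero,
    integral_interval_sub_left (hf.intervalIntegrable 0 (Z + d)) (hf.intervalIntegrable 0 Z)]

theorem HasDerivAt.sub_one_sq_div_two_mul {s : ℝ → ℝ} {s' x : ℝ} (hs : HasDerivAt s s' x)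
    (hx : s x ≠ 0) :
    HasDerivAt (fun y => (s y - 1) ^ 2 / (2 * s y)) (s' * (s x ^ 2 - 1) / (2 * s x ^ 2)) x := by
  refine (((hs.sub_const 1).fun_pow 2).div (hs.const_mul 2)
    (mul_ne_zero two_ne_zero hx)).congr_deriv ?_
  field_simp
  ring

theorem hasDerivAt_energy (K : ℝ) {v f s Δ : ℝ → ℝ} (hf : Continuous f) {η : ℝ} (hsη : s η ≠ 0)
    (hΔ : HasDerivAt Δ ((1 + v η) / (2 * s η ^ 2) - 1 / 2) η)
    (hs : HasDerivAt s (K * ∫ ζ in (0:ℝ)..Δ η, f ζ) η) :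
    HasDerivAt (fun x => (s x - 1) ^ 2 / (2 * s x) + K * ∫ ζ in (0:ℝ)..Δ x, (Δ x - ζ) * f ζ)
      (v η * deriv s η / (2 * s η ^ 2)) η := by
  have hpot := ((hasDerivAt_integral_sub_mul hf 0 (Δ η)).comp η hΔ).const_mul K
  refine ((hs.sub_one_sq_div_two_mul hsη).add hpot).congr_deriv ?_
  rw [hs.deriv]
  field_simp
  ring

theorem energy_identity_general
    (K Z ξbar : ℝ)
    (v n0 : ℝ → ℝ) (hv_cont : Continuous v)
    (hn0_cont : Continuous n0)
    (s Δ : ℝ → ℝ)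
    (hs_pos : ∀ η ∈ Set.Icc (0:ℝ) ξbar, 0 < s η)
    (hΔ' : ∀ η ∈ Set.Icc (0:ℝ) ξbar,
      HasDerivAt Δ ((1 + v η) / (2 * (s η)^2) - 1/2) η)
    (hs' : ∀ η ∈ Set.Icc (0:ℝ) ξbar,
      HasDerivAt s (K * ((∫ ζ in (0:ℝ)..(Z + Δ η), n0 ζ) - ∫ ζ in (0:ℝ)..Z, n0 ζ)) η)
    (hΔ0 : Δ 0 = 0) (hs0 : s 0 = 1)
    (ξ : ℝ) (hξ : ξ ∈ Set.Icc (0:ℝ) ξbar) :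
    (s ξ - 1)^2 / (2 * s ξ) + K * ∫ ζ in (0:ℝ)..(Δ ξ), (Δ ξ - ζ) * n0 (Z + ζ)
      = ∫ η in (0:ℝ)..ξ, v η * deriv s η / (2 * (s η)^2) := by
  have hf : Continuous fun ζ => n0 (Z + ζ) := hn0_cont.comp (continuous_const_add Z)
  have hsub : uIcc 0 ξ ⊆ Icc 0 ξbar := by
    rw [uIcc_of_le hξ.1]
    exact Icc_subset_Icc_right hξ.2
  have hs : ∀ η ∈ Icc 0 ξbar, HasDerivAt s (K * ∫ ζ in (0:ℝ)..Δ η, n0 (Z + ζ)) η := by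
    intro η hη
    rw [integral_comp_add_left_eq_sub hn0_cont]
    exact hs' η hη
  have hΔ_cont : ContinuousOn Δ (Icc 0 ξbar) := fun η hη =>
    (hΔ' η hη).continuousAt.continuousWithinAt
  have hs_cont : ContinuousOn s (Icc 0 ξbar) := fun η hη =>
    (hs η hη).continuousAt.continuousWithinAt
  have hprim : Continuous fun d => K * ∫ ζ in (0:ℝ)..d, n0 (Z + ζ) :=
    continuous_const.mul (continuous_primitive (fun a b => hf.intervalIntegrable a b) 0)
  have hds_cont : ContinuousOn (deriv s) (Icc 0 ξbar) :=
    (hprim.comp_continuousOn hΔ_cont).congr fun η hη => (hs η hη).deriv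
  have hintegrand : ContinuousOn (fun η => v η * deriv s η / (2 * s η ^ 2)) (Icc 0 ξbar) :=
    (hv_cont.continuousOn.mul hds_cont).div (continuousOn_const.mul (hs_cont.pow 2))
      fun η hη => (mul_pos two_pos (pow_pos (hs_pos η hη) 2)).ne'
  rw [integral_eq_sub_of_hasDerivAt
    (fun η hη => hasDerivAt_energy K hf (hs_pos η (hsub hη)).ne' (hΔ' η (hsub hη)) (hs η (hsub hη)))
    ((hintegrand.mono hsub).intervalIntegrable)]
  simp [hs0, hΔ0]

/-- Energy identity for the plane Hamilton system:
`(s(ξ) − 1)²/(2 s(ξ)) + U(Δ(ξ); Z) = ∫₀^ξ v(η) s'(η)/(2 s(η)²) dη`,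
where `U(Δ; Z) = K ∫₀^Δ (Δ − ζ) ñ₀(Z + ζ) dζ`. -/
theorem energy_identity
    (K Z ξbar : ℝ) (hK : 0 < K) (hZ : 0 ≤ Z) (hξbar : 0 ≤ ξbar)
    (v n0 : ℝ → ℝ) (hv_cont : Continuous v) (hv_nonneg : ∀ x, 0 ≤ v x)
    (hn0_cont : Continuous n0) (hn0_nonneg : ∀ x, 0 ≤ n0 x)
    (s Δ : ℝ → ℝ)
    (hs_pos : ∀ η ∈ Set.Icc (0:ℝ) ξbar, 0 < s η)
    (hΔ' : ∀ η ∈ Set.Icc (0:ℝ) ξbar,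
      HasDerivAt Δ ((1 + v η) / (2 * (s η)^2) - 1/2) η)
    (hs' : ∀ η ∈ Set.Icc (0:ℝ) ξbar,
      HasDerivAt s (K * ((∫ ζ in (0:ℝ)..(Z + Δ η), n0 ζ) - ∫ ζ in (0:ℝ)..Z, n0 ζ)) η)
    (hΔ0 : Δ 0 = 0) (hs0 : s 0 = 1)
    (ξ : ℝ) (hξ : ξ ∈ Set.Icc (0:ℝ) ξbar) :
    (s ξ - 1)^2 / (2 * s ξ) + K * ∫ ζ in (0:ℝ)..(Δ ξ), (Δ ξ - ζ) * n0 (Z + ζ)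
      = ∫ η in (0:ℝ)..ξ, v η * deriv s η / (2 * (s η)^2) :=
  energy_identity_general K Z ξbar v n0 hv_cont hn0_cont s Δ hs_pos hΔ' hs' hΔ0 hs0 ξ hξ
end

section
/- Let l > 0, Ω > 0 with Ω l ≤ π, and let v : ℝ → ℝ be nonnegative, integrable on [0, l], and symmetric about l/2, i.e. v(η) = v(l − η) for all η ∈ [0, l]. Then ∫₀^l v(η) cos(Ω(l − η)) dη ≥ 0 (forward direction of the strict short-pulse criterion G_b ≤ 1/2 in the nonrelativistic regime). -/
open MeasureTheory intervalIntegral Real Set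

/-- Forward direction of the strict short-pulse criterion (nonrelativistic
regime): if `Ω l ≤ π` and `v` is nonnegative, integrable and symmetric about
`l/2`, then `2Δ(l) = ∫₀^l v(η) cos(Ω(l − η)) dη ≥ 0`. -/
theorem strictly_short_of_Gb_le_half
    (l Ω : ℝ) (hl : 0 < l) (hΩ : 0 < Ω) (hΩl : Ω * l ≤ Real.pi)
    (v : ℝ → ℝ)
    (hv_nonneg : ∀ η ∈ Set.Icc (0:ℝ) l, 0 ≤ v η)
    (hv : IntervalIntegrable v volume 0 l)
    (hsym : ∀ η ∈ Set.Icc (0:ℝ) l, v η = v (l - η)) :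
    0 ≤ ∫ η in (0:ℝ)..l, v η * Real.cos (Ω * (l - η)) := by
  have huIcc : Set.uIcc (0:ℝ) l = Set.Icc 0 l := Set.uIcc_of_le hl.le
  -- integrability of the two symmetrized pieces
  have hI1 : IntervalIntegrable (fun η => v η * Real.cos (Ω * (l - η))) volume 0 l :=
    (Real.continuous_cos.comp (continuous_const.mul (continuous_const.sub continuous_id))).continuousOn |> hv.mul_continuousOn
  have hI2 : IntervalIntegrable (fun η => v η * Real.cos (Ω * η)) volume 0 l :=
    (Real.continuous_cos.comp (continuous_const.mul continuous_id)).continuousOn |> hv.mul_continuousOn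
  -- the integral is invariant under η ↦ l - η, turning cos(Ω(l-η)) into cos(Ωη)
  have hsub : (∫ η in (0:ℝ)..l, v η * Real.cos (Ω * (l - η)))
      = ∫ η in (0:ℝ)..l, v η * Real.cos (Ω * η) := by
    have h := intervalIntegral.integral_comp_sub_left
      (a := (0:ℝ)) (b := l) (fun x => v x * Real.cos (Ω * (l - x))) l
    simp only [sub_zero, sub_self, sub_sub_cancel] at h
    rw [← h]
    apply intervalIntegral.integral_congr
    intro x hx
    rw [huIcc] at hx
    simp only []
    rw [← hsym x hx]
  have key : 0 ≤ (∫ η in (0:ℝ)..l, v η * Real.cos (Ω * (l - η)))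
      + ∫ η in (0:ℝ)..l, v η * Real.cos (Ω * η) := by
    rw [← intervalIntegral.integral_add hI1 hI2]
    apply intervalIntegral.integral_nonneg hl.le
    intro x hx
    have hx0 := hx.1
    have hxl := hx.2
    have hvx := hv_nonneg x hx
    have hcos : 0 ≤ Real.cos (Ω * (l - x)) + Real.cos (Ω * x) := by
      rw [Real.cos_add_cos]
      have h1 : (Ω * (l - x) + Ω * x) / 2 = Ω * l / 2 := by ring
      have h2 : (Ω * (l - x) - Ω * x) / 2 = Ω * (l - 2 * x) / 2 := by ring
      rw [h1, h2]
      have hc1 : 0 ≤ Real.cos (Ω * l / 2) := by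
        apply Real.cos_nonneg_of_mem_Icc
        constructor
        · nlinarith [Real.pi_pos]
        · linarith
      have hc2 : 0 ≤ Real.cos (Ω * (l - 2 * x) / 2) := by
        apply Real.cos_nonneg_of_mem_Icc
        constructor
        · nlinarith
        · nlinarith
      positivity
    nlinarith
  linarith [hsub ▸ key]
end

section
/- Let (s, Δ) be a solution of the plane Hamilton system on [0, ξ̄], let n_u ≥ 0 satisfy ñ₀(z) ≤ n_u for all z ∈ ℝ, and suppose that s(η) ≥ 1 and 0 ≤ Δ(η) ≤ Δ₀(η) for all η ∈ [0, ξ̄]. Then for every ξ ∈ [0, ξ̄]: ∫₀^ξ v(η) s'(η)/(2 s(η)²) dη ≤ (K n_u / 2) · Δ₀(ξ)². -/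
open MeasureTheory intervalIntegral Real Set

/-! The integrand is nonnegative, and since `s ≥ 1`, `0 ≤ Δ ≤ Δ₀` and `ñ₀ ≤ n_u` it is at most
`v s' / 2 ≤ (K n_u / 2) v Δ₀ = K n_u Δ₀ Δ₀'`, whose integral is `(K n_u / 2) Δ₀²`. -/

/-- Unlike `intervalIntegral.integral_mono_on`, no integrability of the smaller function is needed:
a nonintegrable `f` has integral `0`. -/
theorem intervalIntegral.integral_mono_on_of_nonneg {μ : Measure ℝ} {f g : ℝ → ℝ} {a b : ℝ}
    (hab : a ≤ b) (hg : IntervalIntegrable g μ a b) (h : ∀ x ∈ Icc a b, 0 ≤ f x ∧ f x ≤ g x) :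
    (∫ x in a..b, f x ∂μ) ≤ ∫ x in a..b, g x ∂μ := by
  have hIoc : ∀ x ∈ Ioc a b, 0 ≤ f x ∧ f x ≤ g x := fun x hx => h x (Ioc_subset_Icc_self hx)
  rw [integral_of_le hab, integral_of_le hab]
  refine integral_mono_of_nonneg ?_ hg.1 ?_ <;> refine (ae_restrict_iff' measurableSet_Ioc).2 ?_
  exacts [ae_of_all _ fun x hx => (hIoc x hx).1, ae_of_all _ fun x hx => (hIoc x hx).2]

theorem integral_sub_integral_mem_Icc {f : ℝ → ℝ} {M : ℝ} (hf : Continuous f)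
    (hf_nonneg : ∀ x, 0 ≤ f x) (hf_le : ∀ x, f x ≤ M) (c a : ℝ) {d : ℝ} (hd : 0 ≤ d) :
    (∫ t in c..(a + d), f t) - ∫ t in c..a, f t ∈ Icc 0 (M * d) := by
  rw [integral_interval_sub_left (hf.intervalIntegrable _ _) (hf.intervalIntegrable _ _)]
  have hle : a ≤ a + d := le_add_of_nonneg_right hd
  refine ⟨integral_nonneg hle fun x _ => hf_nonneg x, ?_⟩
  calc (∫ t in a..(a + d), f t) ≤ ∫ _ in a..(a + d), M :=
        integral_mono_on hle (hf.intervalIntegrable _ _) intervalIntegrable_const fun x _ => hf_le x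
    _ = M * d := by simp [mul_comm]

theorem integral_primitive_mul_self {v : ℝ → ℝ} (hv : Continuous v) (a b : ℝ) :
    ∫ x in a..b, (∫ t in a..x, v t) * v x = (∫ t in a..b, v t) ^ 2 / 2 := by
  have hderiv : ∀ x, HasDerivAt (fun y => (∫ t in a..y, v t) ^ 2 / 2)
      ((∫ t in a..x, v t) * v x) x := fun x => by
    refine (((hv.integral_hasStrictDerivAt a x).hasDerivAt.fun_pow 2).div_const 2).congr_deriv ?_
    norm_num
    ring
  have hcont : Continuous fun x => (∫ t in a..x, v t) * v x :=
    (continuous_primitive hv.intervalIntegrable a).mul hv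
  rw [integral_eq_sub_of_hasDerivAt (fun x _ => hderiv x) (hcont.intervalIntegrable _ _)]
  simp

theorem div_two_mul_sq_mem_Icc {v d D s : ℝ} (hv : 0 ≤ v) (hd : 0 ≤ d) (hdD : d ≤ D)
    (hs : 1 ≤ s) : v * d / (2 * s ^ 2) ∈ Icc 0 (v * D / 2) := by
  have hs2 : 1 ≤ s ^ 2 := one_le_pow₀ hs
  refine ⟨by positivity, ?_⟩
  calc v * d / (2 * s ^ 2) ≤ v * d / 2 :=
        div_le_div_of_nonneg_left (by positivity) two_pos (by linarith)
    _ ≤ v * D / 2 := by gcongr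

theorem work_integral_upper_bound_general
    (K Z ξbar : ℝ) (hK : 0 < K)
    (v n0 : ℝ → ℝ) (hv_cont : Continuous v) (hv_nonneg : ∀ x, 0 ≤ v x)
    (hn0_cont : Continuous n0) (hn0_nonneg : ∀ x, 0 ≤ n0 x)
    (s Δ : ℝ → ℝ)
    (hs' : ∀ η ∈ Set.Icc (0:ℝ) ξbar,
      HasDerivAt s (K * ((∫ ζ in (0:ℝ)..(Z + Δ η), n0 ζ) - ∫ ζ in (0:ℝ)..Z, n0 ζ)) η)
    (nu : ℝ) (hn0_le : ∀ z : ℝ, n0 z ≤ nu)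
    (hs_ge : ∀ η ∈ Set.Icc (0:ℝ) ξbar, 1 ≤ s η)
    (hΔ_nonneg : ∀ η ∈ Set.Icc (0:ℝ) ξbar, 0 ≤ Δ η)
    (hΔ_le : ∀ η ∈ Set.Icc (0:ℝ) ξbar, Δ η ≤ (1/2) * ∫ ζ in (0:ℝ)..η, v ζ)
    (ξ : ℝ) (hξ : ξ ∈ Set.Icc (0:ℝ) ξbar) :
    (∫ η in (0:ℝ)..ξ, v η * deriv s η / (2 * (s η)^2))
      ≤ (K * nu / 2) * ((1/2) * ∫ ζ in (0:ℝ)..ξ, v ζ)^2 := by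
  have hnu : 0 ≤ nu := (hn0_nonneg 0).trans (hn0_le 0)
  have hbound : ∀ η ∈ Icc 0 ξ, v η * deriv s η / (2 * (s η)^2) ∈
      Icc 0 (K * nu / 4 * ((∫ ζ in (0:ℝ)..η, v ζ) * v η)) := fun η hη => by
    have hη : η ∈ Icc 0 ξbar := ⟨hη.1, hη.2.trans hξ.2⟩
    obtain ⟨hN_nonneg, hN_le⟩ :=
      integral_sub_integral_mem_Icc hn0_cont hn0_nonneg hn0_le 0 Z (hΔ_nonneg η hη)
    have hds_le : K * ((∫ ζ in (0:ℝ)..(Z + Δ η), n0 ζ) - ∫ ζ in (0:ℝ)..Z, n0 ζ) ≤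
        K * nu * ((1/2) * ∫ ζ in (0:ℝ)..η, v ζ) := by
      rw [mul_assoc]
      gcongr
      exact hN_le.trans (mul_le_mul_of_nonneg_left (hΔ_le η hη) hnu)
    rw [(hs' η hη).deriv]
    convert div_two_mul_sq_mem_Icc (hv_nonneg η) (by positivity) hds_le (hs_ge η hη) using 2
    ring
  calc (∫ η in (0:ℝ)..ξ, v η * deriv s η / (2 * (s η)^2))
      ≤ ∫ η in (0:ℝ)..ξ, K * nu / 4 * ((∫ ζ in (0:ℝ)..η, v ζ) * v η) :=
        integral_mono_on_of_nonneg hξ.1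
          ((continuous_primitive hv_cont.intervalIntegrable 0).mul hv_cont
            |>.intervalIntegrable _ _ |>.const_mul _) hbound
    _ = (K * nu / 2) * ((1/2) * ∫ ζ in (0:ℝ)..ξ, v ζ)^2 := by
      rw [intervalIntegral.integral_const_mul, integral_primitive_mul_self hv_cont]
      ring

/-- Lemma 1 of the paper: bound on the work integral
`ν(ξ) = ∫₀^ξ v s'/(2s²) ≤ (K n_u/2) Δ₀(ξ)²` with `Δ₀(ξ) = (1/2)∫₀^ξ v`. -/
theorem work_integral_upper_bound
    (K Z ξbar : ℝ) (hK : 0 < K) (hZ : 0 ≤ Z) (hξbar : 0 ≤ ξbar)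
    (v n0 : ℝ → ℝ) (hv_cont : Continuous v) (hv_nonneg : ∀ x, 0 ≤ v x)
    (hn0_cont : Continuous n0) (hn0_nonneg : ∀ x, 0 ≤ n0 x)
    (s Δ : ℝ → ℝ)
    (hs_pos : ∀ η ∈ Set.Icc (0:ℝ) ξbar, 0 < s η)
    (hΔ' : ∀ η ∈ Set.Icc (0:ℝ) ξbar,
      HasDerivAt Δ ((1 + v η) / (2 * (s η)^2) - 1/2) η)
    (hs' : ∀ η ∈ Set.Icc (0:ℝ) ξbar,
      HasDerivAt s (K * ((∫ ζ in (0:ℝ)..(Z + Δ η), n0 ζ) - ∫ ζ in (0:ℝ)..Z, n0 ζ)) η)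
    (hΔ0 : Δ 0 = 0) (hs0 : s 0 = 1)
    (nu : ℝ) (hnu : 0 ≤ nu) (hn0_le : ∀ z : ℝ, n0 z ≤ nu)
    (hs_ge : ∀ η ∈ Set.Icc (0:ℝ) ξbar, 1 ≤ s η)
    (hΔ_nonneg : ∀ η ∈ Set.Icc (0:ℝ) ξbar, 0 ≤ Δ η)
    (hΔ_le : ∀ η ∈ Set.Icc (0:ℝ) ξbar, Δ η ≤ (1/2) * ∫ ζ in (0:ℝ)..η, v ζ)
    (ξ : ℝ) (hξ : ξ ∈ Set.Icc (0:ℝ) ξbar) :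
    (∫ η in (0:ℝ)..ξ, v η * deriv s η / (2 * (s η)^2))
      ≤ (K * nu / 2) * ((1/2) * ∫ ζ in (0:ℝ)..ξ, v ζ)^2 :=
  work_integral_upper_bound_general K Z ξbar hK v n0 hv_cont hv_nonneg hn0_cont hn0_nonneg s Δ hs'
    nu hn0_le hs_ge hΔ_nonneg hΔ_le ξ hξ
end

section
/- Let (s, Δ) be a solution of the plane Hamilton system on [0, ξ̄], let n_u ≥ 0 satisfy ñ₀(z) ≤ n_u for all z ∈ ℝ, and suppose 0 ≤ Δ(η) ≤ Δ₀(η) for all η ∈ [0, ξ̄]. Then for every ξ ∈ [0, ξ̄]: s(ξ) ≤ 1 + (K n_u / 2) ∫₀^ξ (ξ − η) v(η) dη. -/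
open MeasureTheory intervalIntegral Real Set

/-- Upper bound on the s-factor: if `0 ≤ Δ ≤ Δ₀` on `[0, ξ̄]` and
`ñ₀ ≤ n_u`, then `s(ξ) ≤ 1 + (K n_u/2) ∫₀^ξ (ξ − η) v(η) dη`. -/
theorem s_upper_bound
    (K Z ξbar : ℝ) (hK : 0 < K) (hZ : 0 ≤ Z) (hξbar : 0 ≤ ξbar)
    (v n0 : ℝ → ℝ) (hv_cont : Continuous v) (hv_nonneg : ∀ x, 0 ≤ v x)
    (hn0_cont : Continuous n0) (hn0_nonneg : ∀ x, 0 ≤ n0 x)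
    (s Δ : ℝ → ℝ)
    (hs_pos : ∀ η ∈ Set.Icc (0:ℝ) ξbar, 0 < s η)
    (hΔ' : ∀ η ∈ Set.Icc (0:ℝ) ξbar,
      HasDerivAt Δ ((1 + v η) / (2 * (s η)^2) - 1/2) η)
    (hs' : ∀ η ∈ Set.Icc (0:ℝ) ξbar,
      HasDerivAt s (K * ((∫ ζ in (0:ℝ)..(Z + Δ η), n0 ζ) - ∫ ζ in (0:ℝ)..Z, n0 ζ)) η)
    (hΔ0 : Δ 0 = 0) (hs0 : s 0 = 1)
    (nu : ℝ) (hnu : 0 ≤ nu) (hn0_le : ∀ z : ℝ, n0 z ≤ nu)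
    (hΔ_nonneg : ∀ η ∈ Set.Icc (0:ℝ) ξbar, 0 ≤ Δ η)
    (hΔ_le : ∀ η ∈ Set.Icc (0:ℝ) ξbar, Δ η ≤ (1/2) * ∫ ζ in (0:ℝ)..η, v ζ)
    (ξ : ℝ) (hξ : ξ ∈ Set.Icc (0:ℝ) ξbar) :
    s ξ ≤ 1 + (K * nu / 2) * ∫ η in (0:ℝ)..ξ, (ξ - η) * v η := by
  obtain ⟨hξ0, hξb⟩ := hξ
  have huIcc : Set.uIcc (0:ℝ) ξ = Set.Icc 0 ξ := Set.uIcc_of_le hξ0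
  have hsub : Set.Icc (0:ℝ) ξ ⊆ Set.Icc 0 ξbar := Set.Icc_subset_Icc le_rfl hξb
  set F : ℝ → ℝ := fun η => ∫ ζ in (0:ℝ)..η, v ζ with hF
  set g : ℝ → ℝ := fun η =>
    K * ((∫ ζ in (0:ℝ)..(Z + Δ η), n0 ζ) - ∫ ζ in (0:ℝ)..Z, n0 ζ) with hg
  -- continuity facts
  have hΔcont : ContinuousOn Δ (Set.Icc 0 ξbar) := fun η hη =>
    (hΔ' η hη).continuousAt.continuousWithinAt
  have hNcont : Continuous (fun z => ∫ ζ in (0:ℝ)..z, n0 ζ) :=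
    intervalIntegral.continuous_primitive (fun a b => hn0_cont.intervalIntegrable a b) 0
  have hgcont : ContinuousOn g (Set.Icc 0 ξbar) := by
    apply ContinuousOn.mul continuousOn_const
    exact (hNcont.comp_continuousOn ((continuousOn_const).add hΔcont)).sub continuousOn_const
  have hgint : IntervalIntegrable g volume 0 ξ :=
    (hgcont.mono hsub).intervalIntegrable_of_Icc hξ0
  have hFcont : Continuous F :=
    intervalIntegral.continuous_primitive (fun a b => hv_cont.intervalIntegrable a b) 0
  -- FTC for s
  have hftc : ∫ η in (0:ℝ)..ξ, g η = s ξ - s 0 := by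
    apply intervalIntegral.integral_eq_sub_of_hasDerivAt
    · intro η hη
      rw [huIcc] at hη
      exact hs' η (hsub hη)
    · exact hgint
  -- pointwise bound g η ≤ (K*nu/2) * F η on Icc 0 ξ
  have hbound : ∀ η ∈ Set.Icc (0:ℝ) ξ, g η ≤ K * nu / 2 * F η := by
    intro η hη
    have hηb := hsub hη
    have hΔη := hΔ_nonneg η hηb
    have h1 : (∫ ζ in (0:ℝ)..(Z + Δ η), n0 ζ) - ∫ ζ in (0:ℝ)..Z, n0 ζ
        = ∫ ζ in Z..(Z + Δ η), n0 ζ :=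
      intervalIntegral.integral_interval_sub_left
        (hn0_cont.intervalIntegrable _ _) (hn0_cont.intervalIntegrable _ _)
    have h2 : (∫ ζ in Z..(Z + Δ η), n0 ζ) ≤ ∫ ζ in Z..(Z + Δ η), nu := by
      apply intervalIntegral.integral_mono_on (by linarith)
        (hn0_cont.intervalIntegrable _ _) intervalIntegrable_const
      intro x _; exact hn0_le x
    rw [intervalIntegral.integral_const, smul_eq_mul] at h2
    have h3 : Δ η ≤ (1/2) * F η := hΔ_le η hηb
    have h2' : (∫ ζ in Z..(Z + Δ η), n0 ζ) ≤ Δ η * nu := by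
      have e : (Z + Δ η - Z) * nu = Δ η * nu := by ring
      linarith
    have hgη : g η = K * ∫ ζ in Z..(Z + Δ η), n0 ζ := by simp only [hg]; rw [h1]
    rw [hgη]
    calc K * ∫ ζ in Z..(Z + Δ η), n0 ζ ≤ K * (Δ η * nu) :=
          mul_le_mul_of_nonneg_left h2' hK.le
      _ ≤ K * (1/2 * F η * nu) :=
          mul_le_mul_of_nonneg_left (mul_le_mul_of_nonneg_right h3 hnu) hK.le
      _ = K * nu / 2 * F η := by ring
  -- integrate the bound
  have hFint : IntervalIntegrable (fun η => K * nu / 2 * F η) volume 0 ξ :=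
    (continuous_const.mul hFcont).intervalIntegrable _ _
  have hmono : (∫ η in (0:ℝ)..ξ, g η) ≤ ∫ η in (0:ℝ)..ξ, K * nu / 2 * F η :=
    intervalIntegral.integral_mono_on hξ0 hgint hFint hbound
  -- integration by parts: ∫ F = ∫ (ξ-η) v η
  have hparts : (∫ η in (0:ℝ)..ξ, F η) = ∫ η in (0:ℝ)..ξ, (ξ - η) * v η := by
    have hu : ∀ x ∈ Set.uIcc (0:ℝ) ξ, HasDerivAt F (v x) x := by
      intro x _
      exact intervalIntegral.integral_hasDerivAt_right
        (hv_cont.intervalIntegrable _ _)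
        (hv_cont.stronglyMeasurableAtFilter _ _) hv_cont.continuousAt
    have hw : ∀ x ∈ Set.uIcc (0:ℝ) ξ, HasDerivAt (fun y => y - ξ) (1:ℝ) x := by
      intro x _
      simpa using (hasDerivAt_id x).sub_const ξ
    have := intervalIntegral.integral_mul_deriv_eq_deriv_mul hu hw
      (hv_cont.intervalIntegrable _ _) (intervalIntegrable_const)
    have hF0 : F 0 = 0 := by simp [hF]
    simp only [mul_one, hF0, zero_mul, sub_self, mul_zero, zero_sub] at this
    rw [this, ← intervalIntegral.integral_neg]
    apply intervalIntegral.integral_congr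
    intro x _
    ring
  have hiF : (∫ η in (0:ℝ)..ξ, K * nu / 2 * F η)
      = K * nu / 2 * ∫ η in (0:ℝ)..ξ, (ξ - η) * v η := by
    rw [intervalIntegral.integral_const_mul, hparts]
  rw [hs0] at hftc
  linarith [hmono.trans_eq hiF, hftc]
end

section
/- Let (s, Δ) be a solution of the plane Hamilton system on [0, ξ̄], and let S : [0, ξ̄] → ℝ be a continuous function with s(η) ≤ S(η) and S(η) ≥ 1 for all η ∈ [0, ξ̄]. Then for every ξ ∈ [0, ξ̄]: Δ(ξ) ≥ ∫₀^ξ (1 + v(η))/(2 S(η)²) dη − ξ/2. -/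
open MeasureTheory intervalIntegral Real Set

/-- Lower bound on the displacement: if `s ≤ S` with `S ≥ 1` continuous,
then `Δ(ξ) ≥ ∫₀^ξ (1 + v(η))/(2 S(η)²) dη − ξ/2`. -/
theorem Delta_lower_bound
    (K Z ξbar : ℝ) (hK : 0 < K) (hZ : 0 ≤ Z) (hξbar : 0 ≤ ξbar)
    (v n0 : ℝ → ℝ) (hv_cont : Continuous v) (hv_nonneg : ∀ x, 0 ≤ v x)
    (hn0_cont : Continuous n0) (hn0_nonneg : ∀ x, 0 ≤ n0 x)
    (s Δ : ℝ → ℝ)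
    (hs_pos : ∀ η ∈ Set.Icc (0:ℝ) ξbar, 0 < s η)
    (hΔ' : ∀ η ∈ Set.Icc (0:ℝ) ξbar,
      HasDerivAt Δ ((1 + v η) / (2 * (s η)^2) - 1/2) η)
    (hs' : ∀ η ∈ Set.Icc (0:ℝ) ξbar,
      HasDerivAt s (K * ((∫ ζ in (0:ℝ)..(Z + Δ η), n0 ζ) - ∫ ζ in (0:ℝ)..Z, n0 ζ)) η)
    (hΔ0 : Δ 0 = 0) (hs0 : s 0 = 1)
    (S : ℝ → ℝ) (hS_cont : ContinuousOn S (Set.Icc (0:ℝ) ξbar))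
    (hsS : ∀ η ∈ Set.Icc (0:ℝ) ξbar, s η ≤ S η)
    (hS_ge : ∀ η ∈ Set.Icc (0:ℝ) ξbar, 1 ≤ S η)
    (ξ : ℝ) (hξ : ξ ∈ Set.Icc (0:ℝ) ξbar) :
    Δ ξ ≥ (∫ η in (0:ℝ)..ξ, (1 + v η) / (2 * (S η)^2)) - ξ / 2 := by
  obtain ⟨hξ0, hξb⟩ := hξ
  have hsub : Set.Icc (0:ℝ) ξ ⊆ Set.Icc (0:ℝ) ξbar :=
    Set.Icc_subset_Icc le_rfl hξb
  have huIcc : Set.uIcc (0:ℝ) ξ = Set.Icc 0 ξ := Set.uIcc_of_le hξ0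
  -- continuity of s on Icc 0 ξbar
  have hs_cont : ContinuousOn s (Set.Icc 0 ξbar) := fun η hη =>
    ((hs' η hη).continuousAt).continuousWithinAt
  -- continuity of integrand with s
  have hfs_cont : ContinuousOn (fun η => (1 + v η) / (2 * (s η)^2)) (Set.Icc 0 ξbar) := by
    apply ContinuousOn.div
    · exact (continuous_const.add hv_cont).continuousOn
    · exact (continuousOn_const.mul (hs_cont.pow 2))
    · intro η hη
      have := hs_pos η hη
      positivity
  have hint_s : IntervalIntegrable (fun η => (1 + v η) / (2 * (s η)^2)) volume 0 ξ := by
    apply ContinuousOn.intervalIntegrable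
    rw [huIcc]; exact hfs_cont.mono hsub
  have hint_S : IntervalIntegrable (fun η => (1 + v η) / (2 * (S η)^2)) volume 0 ξ := by
    apply ContinuousOn.intervalIntegrable
    rw [huIcc]
    apply ContinuousOn.div
    · exact (continuous_const.add hv_cont).continuousOn
    · exact continuousOn_const.mul (((hS_cont.mono hsub).pow 2))
    · intro η hη
      have := lt_of_lt_of_le one_pos (hS_ge η (hsub hη))
      positivity
  have hint_f : IntervalIntegrable (fun η => (1 + v η) / (2 * (s η)^2) - 1/2) volume 0 ξ :=
    hint_s.sub intervalIntegrable_const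
  have hFTC : ∫ η in (0:ℝ)..ξ, ((1 + v η) / (2 * (s η)^2) - 1/2) = Δ ξ - Δ 0 := by
    apply intervalIntegral.integral_eq_sub_of_hasDerivAt
    · intro η hη
      rw [huIcc] at hη
      exact hΔ' η (hsub hη)
    · exact hint_f
  have hsplit : ∫ η in (0:ℝ)..ξ, ((1 + v η) / (2 * (s η)^2) - 1/2)
      = (∫ η in (0:ℝ)..ξ, (1 + v η) / (2 * (s η)^2)) - ξ/2 := by
    rw [intervalIntegral.integral_sub hint_s intervalIntegrable_const,
      intervalIntegral.integral_const]
    congr 1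
    simp [smul_eq_mul]
    ring
  have hmono : (∫ η in (0:ℝ)..ξ, (1 + v η) / (2 * (S η)^2))
      ≤ ∫ η in (0:ℝ)..ξ, (1 + v η) / (2 * (s η)^2) := by
    apply intervalIntegral.integral_mono_on hξ0 hint_S hint_s
    intro η hη
    have hsp := hs_pos η (hsub hη)
    have hSp : 0 < S η := lt_of_lt_of_le one_pos (hS_ge η (hsub hη))
    have hle := hsS η (hsub hη)
    have hnum : 0 ≤ 1 + v η := by have := hv_nonneg η; linarith
    apply div_le_div_of_nonneg_left hnum (by positivity)
    · have : (s η)^2 ≤ (S η)^2 := by nlinarith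
      nlinarith
  have : Δ ξ = (∫ η in (0:ℝ)..ξ, (1 + v η) / (2 * (s η)^2)) - ξ/2 := by
    rw [← hsplit, hFTC, hΔ0]; ring
  rw [this]
  linarith
end

section
/- Let (s, Δ) be a solution of the plane Hamilton system on [0, ξ̄], let S : [0, ξ̄] → ℝ be continuous with s(η) ≤ S(η) and S(η) ≥ 1 for all η ∈ [0, ξ̄], suppose Δ(η) ≥ 0 for all η ∈ [0, ξ̄], and let n_d ≥ 0 satisfy ñ₀(z) ≥ n_d for all z ≥ Z. Then for every ξ ∈ [0, ξ̄]: s(ξ) ≥ 1 + (K n_d / 2) ∫₀^ξ (ξ − η) [(1 + v(η))/S(η)² − 1] dη. -/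
open MeasureTheory intervalIntegral Real Set

/-- Lower bound on the s-factor: if `s ≤ S` with `S ≥ 1` continuous,
`Δ ≥ 0` on `[0, ξ̄]`, and `ñ₀ ≥ n_d` on `[Z, ∞)`, then
`s(ξ) ≥ 1 + (K n_d/2) ∫₀^ξ (ξ − η)[(1 + v(η))/S(η)² − 1] dη`. -/
theorem s_lower_bound
    (K Z ξbar : ℝ) (hK : 0 < K) (hZ : 0 ≤ Z) (hξbar : 0 ≤ ξbar)
    (v n0 : ℝ → ℝ) (hv_cont : Continuous v) (hv_nonneg : ∀ x, 0 ≤ v x)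
    (hn0_cont : Continuous n0) (hn0_nonneg : ∀ x, 0 ≤ n0 x)
    (s Δ : ℝ → ℝ)
    (hs_pos : ∀ η ∈ Set.Icc (0:ℝ) ξbar, 0 < s η)
    (hΔ' : ∀ η ∈ Set.Icc (0:ℝ) ξbar,
      HasDerivAt Δ ((1 + v η) / (2 * (s η)^2) - 1/2) η)
    (hs' : ∀ η ∈ Set.Icc (0:ℝ) ξbar,
      HasDerivAt s (K * ((∫ ζ in (0:ℝ)..(Z + Δ η), n0 ζ) - ∫ ζ in (0:ℝ)..Z, n0 ζ)) η)
    (hΔ0 : Δ 0 = 0) (hs0 : s 0 = 1)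
    (S : ℝ → ℝ) (hS_cont : ContinuousOn S (Set.Icc (0:ℝ) ξbar))
    (hsS : ∀ η ∈ Set.Icc (0:ℝ) ξbar, s η ≤ S η)
    (hS_ge : ∀ η ∈ Set.Icc (0:ℝ) ξbar, 1 ≤ S η)
    (hΔ_nonneg : ∀ η ∈ Set.Icc (0:ℝ) ξbar, 0 ≤ Δ η)
    (nd : ℝ) (hnd : 0 ≤ nd) (hn0_ge : ∀ z : ℝ, Z ≤ z → nd ≤ n0 z)
    (ξ : ℝ) (hξ : ξ ∈ Set.Icc (0:ℝ) ξbar) :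
    s ξ ≥ 1 + (K * nd / 2) *
      ∫ η in (0:ℝ)..ξ, (ξ - η) * ((1 + v η) / (S η)^2 - 1) := by
  obtain ⟨hξ0, hξu⟩ := hξ
  -- clamp to the interval
  set pr : ℝ → ℝ := fun x => max 0 (min x ξbar) with hprdef
  have hpr_cont : Continuous pr := continuous_const.max (continuous_id.min continuous_const)
  have hpr_mem : ∀ x, pr x ∈ Set.Icc (0:ℝ) ξbar := by
    intro x
    constructor
    · exact le_max_left _ _
    · simp only [hprdef, max_le_iff]
      exact ⟨hξbar, min_le_right _ _⟩
  have hpr_eq : ∀ x ∈ Set.Icc (0:ℝ) ξbar, pr x = x := by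
    intro x hx
    simp only [hprdef]
    rw [min_eq_left hx.2, max_eq_right hx.1]
  -- extended S
  set Sx : ℝ → ℝ := fun x => S (pr x) with hSxdef
  have hSx_cont : Continuous Sx :=
    hS_cont.comp_continuous hpr_cont hpr_mem
  have hSx_ge : ∀ x, 1 ≤ Sx x := fun x => hS_ge _ (hpr_mem x)
  have hSx_pos : ∀ x, (0:ℝ) < (Sx x)^2 := fun x =>
    pow_pos (lt_of_lt_of_le one_pos (hSx_ge x)) 2
  have hSx_eq : ∀ x ∈ Set.Icc (0:ℝ) ξbar, Sx x = S x := by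
    intro x hx; simp only [hSxdef, hpr_eq x hx]
  -- the function g
  set g : ℝ → ℝ := fun x => (1 + v x) / (Sx x)^2 - 1 with hgdef
  have hg_cont : Continuous g := by
    apply Continuous.sub _ continuous_const
    exact (continuous_const.add hv_cont).div (hSx_cont.pow 2)
      (fun x => ne_of_gt (hSx_pos x))
  -- G = primitive of g
  set G : ℝ → ℝ := fun x => ∫ τ in (0:ℝ)..x, g τ with hGdef
  have hG_deriv : ∀ x, HasDerivAt G (g x) x := fun x =>
    (hg_cont.integral_hasStrictDerivAt 0 x).hasDerivAt
  have hG0 : G 0 = 0 := by simp [hGdef]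
  -- continuity of Δ and s on Icc
  have hΔ_cont : ContinuousOn Δ (Set.Icc (0:ℝ) ξbar) := fun x hx =>
    (hΔ' x hx).continuousAt.continuousWithinAt
  have hs_cont : ContinuousOn s (Set.Icc (0:ℝ) ξbar) := fun x hx =>
    (hs' x hx).continuousAt.continuousWithinAt
  -- Step A : Δ η ≥ (1/2) G η on Icc
  have hIcc_int : interior (Set.Icc (0:ℝ) ξbar) ⊆ Set.Icc (0:ℝ) ξbar := interior_subset
  have stepA : ∀ η ∈ Set.Icc (0:ℝ) ξbar, (1/2) * G η ≤ Δ η := by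
    set D : ℝ → ℝ := fun x => Δ x - (1/2) * G x with hDdef
    have hD_deriv : ∀ x ∈ Set.Icc (0:ℝ) ξbar,
        HasDerivAt D ((1 + v x) / (2 * (s x)^2) - 1/2 - (1/2) * g x) x := by
      intro x hx
      exact (hΔ' x hx).sub ((hG_deriv x).const_mul (1/2))
    have hD_mono : MonotoneOn D (Set.Icc (0:ℝ) ξbar) := by
      apply monotoneOn_of_hasDerivWithinAt_nonneg (convex_Icc _ _)
        (f' := fun x => (1 + v x) / (2 * (s x)^2) - 1/2 - (1/2) * g x)
      · intro x hx
        exact ((hΔ' x hx).sub ((hG_deriv x).const_mul (1/2))).continuousAt.continuousWithinAt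
      · intro x hx
        exact (hD_deriv x (hIcc_int hx)).hasDerivWithinAt
      · intro x hx
        have hx' := hIcc_int hx
        have h1 : (1 + v x) / (2 * (S x)^2) ≤ (1 + v x) / (2 * (s x)^2) := by
          have hsp := hs_pos x hx'
          apply div_le_div_of_nonneg_left (by linarith [hv_nonneg x])
          · nlinarith
          · have := hsS x hx'
            nlinarith
        have h2 : Sx x = S x := hSx_eq x hx'
        have hSp : (0:ℝ) < (S x)^2 := by rw [← h2]; exact hSx_pos x
        have : (1/2 : ℝ) * g x = (1 + v x) / (2 * (S x)^2) - 1/2 := by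
          simp only [hgdef, h2]
          field_simp
        rw [this]
        linarith
    intro η hη
    have h0 : (0:ℝ) ∈ Set.Icc (0:ℝ) ξbar := ⟨le_refl _, hξbar⟩
    have := hD_mono h0 hη hη.1
    simp only [hDdef, hΔ0, hG0] at this
    linarith
  -- Step B : lower bound for s'
  have stepB : ∀ η ∈ Set.Icc (0:ℝ) ξbar,
      nd * Δ η ≤ (∫ ζ in (0:ℝ)..(Z + Δ η), n0 ζ) - ∫ ζ in (0:ℝ)..Z, n0 ζ := by
    intro η hη
    have hint : ∀ a b : ℝ, IntervalIntegrable n0 volume a b :=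
      fun a b => hn0_cont.intervalIntegrable a b
    have hsplit : (∫ ζ in (0:ℝ)..Z, n0 ζ) + (∫ ζ in Z..(Z + Δ η), n0 ζ)
        = ∫ ζ in (0:ℝ)..(Z + Δ η), n0 ζ :=
      integral_add_adjacent_intervals (hint 0 Z) (hint Z (Z + Δ η))
    have hΔn := hΔ_nonneg η hη
    have hmono : (∫ ζ in Z..(Z + Δ η), (nd : ℝ)) ≤ ∫ ζ in Z..(Z + Δ η), n0 ζ := by
      apply integral_mono_on (by linarith) (intervalIntegrable_const) (hint _ _)
      intro x hx
      exact hn0_ge x hx.1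
    rw [intervalIntegral.integral_const, smul_eq_mul] at hmono
    have : (Z + Δ η - Z) * nd = nd * Δ η := by ring
    rw [this] at hmono
    linarith
  -- extended Δ
  set Δx : ℝ → ℝ := fun x => Δ (pr x) with hΔxdef
  have hΔx_cont : Continuous Δx := hΔ_cont.comp_continuous hpr_cont hpr_mem
  have hΔx_eq : ∀ x ∈ Set.Icc (0:ℝ) ξbar, Δx x = Δ x := by
    intro x hx; simp only [hΔxdef, hpr_eq x hx]
  set H : ℝ → ℝ := fun x => ∫ τ in (0:ℝ)..x, Δx τ with hHdef
  have hH_deriv : ∀ x, HasDerivAt H (Δx x) x := fun x =>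
    (hΔx_cont.integral_hasStrictDerivAt 0 x).hasDerivAt
  -- Step C : s ξ ≥ 1 + K nd H ξ
  have stepC : 1 + K * nd * H ξ ≤ s ξ := by
    set E : ℝ → ℝ := fun x => s x - K * nd * H x with hEdef
    have hE_mono : MonotoneOn E (Set.Icc (0:ℝ) ξbar) := by
      apply monotoneOn_of_hasDerivWithinAt_nonneg (convex_Icc _ _)
        (f' := fun x => K * ((∫ ζ in (0:ℝ)..(Z + Δ x), n0 ζ) - ∫ ζ in (0:ℝ)..Z, n0 ζ)
          - K * nd * Δx x)
      · intro x hx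
        exact ((hs' x hx).sub ((hH_deriv x).const_mul (K*nd))).continuousAt.continuousWithinAt
      · intro x hx
        exact (((hs' x (hIcc_int hx)).sub
          ((hH_deriv x).const_mul (K*nd)))).hasDerivWithinAt
      · intro x hx
        have hx' := hIcc_int hx
        have hB := stepB x hx'
        rw [hΔx_eq x hx']
        have : K * (nd * Δ x) ≤ K * ((∫ ζ in (0:ℝ)..(Z + Δ x), n0 ζ)
            - ∫ ζ in (0:ℝ)..Z, n0 ζ) := mul_le_mul_of_nonneg_left hB hK.le
        nlinarith
    have h0 : (0:ℝ) ∈ Set.Icc (0:ℝ) ξbar := ⟨le_refl _, hξbar⟩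
    have := hE_mono h0 ⟨hξ0, hξu⟩ hξ0
    have hH0 : H 0 = 0 := by simp [hHdef]
    simp only [hEdef, hs0, hH0] at this
    linarith
  -- Step D : H ξ ≥ (1/2) ∫ G
  have hsub : Set.uIcc (0:ℝ) ξ ⊆ Set.Icc (0:ℝ) ξbar := by
    rw [Set.uIcc_of_le hξ0]
    exact Set.Icc_subset_Icc (le_refl _) hξu
  have hG_cont : Continuous G :=
    continuous_iff_continuousAt.2 fun x => (hG_deriv x).continuousAt
  have stepD : (1/2) * ∫ η in (0:ℝ)..ξ, G η ≤ H ξ := by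
    rw [← intervalIntegral.integral_const_mul]
    apply integral_mono_on hξ0
      ((continuous_const.mul hG_cont).intervalIntegrable _ _)
      (hΔx_cont.intervalIntegrable _ _)
    intro x hx
    have hx' : x ∈ Set.Icc (0:ℝ) ξbar := Set.Icc_subset_Icc (le_refl _) hξu hx
    rw [hΔx_eq x hx']
    exact stepA x hx'
  -- Step E : integration by parts
  have stepE : (∫ η in (0:ℝ)..ξ, G η) = ∫ η in (0:ℝ)..ξ, (ξ - η) * g η := by
    have hparts := intervalIntegral.integral_mul_deriv_eq_deriv_mul
      (u := fun η => ξ - η) (u' := fun _ => (-1 : ℝ)) (v := G) (v' := g)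
      (a := 0) (b := ξ)
      (fun x _ => by simpa using (hasDerivAt_id x).const_sub ξ)
      (fun x _ => hG_deriv x)
      (intervalIntegrable_const)
      (hg_cont.intervalIntegrable _ _)
    have h2 : (∫ η in (0:ℝ)..ξ, (ξ - η) * g η) = ∫ η in (0:ℝ)..ξ, G η := by
      rw [hparts]
      simp [hG0, intervalIntegral.integral_neg]
    exact h2.symm
  -- Step F : rewrite g in terms of S on the interval
  have stepF : (∫ η in (0:ℝ)..ξ, (ξ - η) * g η)
      = ∫ η in (0:ℝ)..ξ, (ξ - η) * ((1 + v η) / (S η)^2 - 1) := by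
    apply intervalIntegral.integral_congr
    intro x hx
    have hx' : x ∈ Set.Icc (0:ℝ) ξbar := hsub hx
    simp only [hgdef, hSx_eq x hx']
  -- combine
  have hKnd : (0:ℝ) ≤ K * nd := mul_nonneg hK.le hnd
  have hchain : K * nd * ((1/2) * ∫ η in (0:ℝ)..ξ, G η) ≤ K * nd * H ξ :=
    mul_le_mul_of_nonneg_left stepD hKnd
  have hfinal : 1 + (K * nd / 2) * (∫ η in (0:ℝ)..ξ, G η) ≤ s ξ := by
    have : K * nd / 2 * (∫ η in (0:ℝ)..ξ, G η)
        = K * nd * ((1/2) * ∫ η in (0:ℝ)..ξ, G η) := by ring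
    rw [this]
    linarith
  rw [ge_iff_le, ← stepF, ← stepE]
  exact hfinal
end

section
/- Let M_u ≥ 0 and let v : ℝ → ℝ be nonnegative and integrable on [0, ξ]. Define Δ₀(ξ) := (1/2) ∫₀^ξ v(η) dη, g(η) := (M_u/2) ∫₀^η (η − ζ) v(ζ) dζ, and d(ξ) := ∫₀^ξ (1 + v(η))/(2 (1 + g(η))²) dη − ξ/2. Then d(ξ) ≥ Δ₀(ξ) · [1 − (M_u/2) ξ² − M_u ξ Δ₀(ξ)]. -/
/-!
Write `G(η) = ∫₀^η (η - ζ) v(ζ) dζ` and `V(η) = ∫₀^η v`. Since `0 ≤ G(η) ≤ η V(η)` and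
`1 / (1 + g)² ≥ 1 - 2g` for `g ≥ 0`, the integrand of `d` is bounded below by
`(1 + v(η)) / 2 - (M_u / 2) (η V(ξ) + ξ v(η) V(η))`. Integrating this minorant exactly, using
`∫₀^ξ v V = V(ξ)² / 2` (integration by parts for the absolutely continuous primitive `V`),
gives the bound.
-/

open MeasureTheory intervalIntegral Real Set

theorem integral_mul_primitive {f : ℝ → ℝ} {a b : ℝ}
    (hf : IntervalIntegrable f volume a b) :
    ∫ x in a..b, f x * ∫ t in a..x, f t = (∫ x in a..b, f x) ^ 2 / 2 := by
  set F : ℝ → ℝ := fun x => ∫ t in a..x, f t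
  have hF : AbsolutelyContinuousOnInterval F a b :=
    hf.absolutelyContinuousOnInterval_intervalIntegral left_mem_uIcc
  have hderiv : ∀ᵐ x, x ∈ uIoc a b → f x * F x = deriv F x * F x := by
    filter_upwards [hf.ae_hasDerivAt_integral] with x hx hxab
    rw [(hx (uIoc_subset_uIcc hxab) a left_mem_uIcc).deriv]
  have hFa : F a = 0 := integral_same
  calc ∫ x in a..b, f x * F x
      = (∫ x in a..b, deriv F x * F x + F x * deriv F x) / 2 := by
        rw [integral_congr_ae hderiv, ← intervalIntegral.integral_div]
        congr 1 with x
        ring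
    _ = F b ^ 2 / 2 := by rw [hF.integral_deriv_mul_eq_sub hF, hFa]; ring

theorem one_sub_two_mul_le_inv_one_add_sq {g : ℝ} (hg : 0 ≤ g) :
    1 - 2 * g ≤ ((1 + g) ^ 2)⁻¹ := by
  rw [← one_div, le_div_iff₀ (by positivity)]
  nlinarith [sq_nonneg g, pow_nonneg hg 3]

section

variable {v : ℝ → ℝ} {a b x : ℝ}

theorem IntervalIntegrable.mul_primitive (hv : IntervalIntegrable v volume a b) :
    IntervalIntegrable (fun x => v x * ∫ t in a..x, v t) volume a b :=
  hv.mul_continuousOn (continuousOn_primitive_interval' hv left_mem_uIcc)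

theorem integral_sub_mul_eq (hv : IntervalIntegrable v volume a x) :
    ∫ t in a..x, (x - t) * v t = x * (∫ t in a..x, v t) - ∫ t in a..x, t * v t := by
  have hid : IntervalIntegrable (fun t => t * v t) volume a x := hv.continuousOn_mul continuousOn_id
  simp_rw [sub_mul]
  rw [integral_sub (hv.const_mul x) hid, intervalIntegral.integral_const_mul]

theorem continuousOn_integral_sub_mul (hv : IntervalIntegrable v volume a b) :
    ContinuousOn (fun x => ∫ t in a..x, (x - t) * v t) (uIcc a b) := by
  have hid : IntervalIntegrable (fun t => t * v t) volume a b := hv.continuousOn_mul continuousOn_id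
  refine ((continuousOn_id.mul (continuousOn_primitive_interval' hv left_mem_uIcc)).sub
    (continuousOn_primitive_interval' hid left_mem_uIcc)).congr fun x hx => ?_
  exact integral_sub_mul_eq (hv.mono_set (uIcc_subset_uIcc left_mem_uIcc hx))

theorem integral_sub_mul_mem_Icc (hv_nonneg : ∀ t, 0 ≤ v t)
    (hv : IntervalIntegrable v volume a x) (hax : a ≤ x) :
    ∫ t in a..x, (x - t) * v t ∈ Icc 0 ((x - a) * ∫ t in a..x, v t) := by
  have hint : IntervalIntegrable (fun t => (x - t) * v t) volume a x :=
    hv.continuousOn_mul (continuousOn_const.sub continuousOn_id)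
  refine ⟨integral_nonneg hax fun t ht => mul_nonneg (by linarith [ht.2]) (hv_nonneg t), ?_⟩
  rw [← intervalIntegral.integral_const_mul]
  exact integral_mono_on hax hint (hv.const_mul _) fun t ht =>
    mul_le_mul_of_nonneg_right (by linarith [ht.1]) (hv_nonneg t)

end

section

variable {Mu ξ : ℝ} {v : ℝ → ℝ}

theorem intervalIntegrable_div_sq_one_add_integral_sub_mul (hMu : 0 ≤ Mu) (hξ : 0 ≤ ξ)
    (hv_nonneg : ∀ x, 0 ≤ v x) (hv : IntervalIntegrable v volume 0 ξ) :
    IntervalIntegrable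
      (fun η => (1 + v η) / (2 * (1 + (Mu / 2) * ∫ ζ in (0:ℝ)..η, (η - ζ) * v ζ) ^ 2))
      volume 0 ξ := by
  have hden : ContinuousOn
      (fun η => 2 * (1 + (Mu / 2) * ∫ ζ in (0:ℝ)..η, (η - ζ) * v ζ) ^ 2) (uIcc 0 ξ) :=
    continuousOn_const.mul
      ((continuousOn_const.add (continuousOn_const.mul (continuousOn_integral_sub_mul hv))).pow 2)
  refine (intervalIntegrable_const.add hv).mul_continuousOn (hden.inv₀ fun η hη => ?_)
  rw [uIcc_of_le hξ] at hη
  have hG := (integral_sub_mul_mem_Icc hv_nonneg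
    (hv.mono_set (uIcc_subset_uIcc left_mem_uIcc (by rwa [uIcc_of_le hξ]))) hη.1).1
  have hg : 0 ≤ Mu / 2 * ∫ ζ in (0:ℝ)..η, (η - ζ) * v ζ := mul_nonneg (by linarith) hG
  exact (mul_pos two_pos (pow_pos (by linarith) 2)).ne'

noncomputable def integrandMinorant (Mu ξ : ℝ) (v : ℝ → ℝ) (η : ℝ) : ℝ :=
  (1 + v η) / 2
    - Mu / 2 * ((∫ t in (0:ℝ)..ξ, v t) * η + ξ * (v η * ∫ t in (0:ℝ)..η, v t))

theorem integrandMinorant_le (hMu : 0 ≤ Mu) (hv_nonneg : ∀ x, 0 ≤ v x)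
    (hv : IntervalIntegrable v volume 0 ξ) {η : ℝ} (hη : η ∈ Icc 0 ξ) :
    integrandMinorant Mu ξ v η
      ≤ (1 + v η) / (2 * (1 + (Mu / 2) * ∫ ζ in (0:ℝ)..η, (η - ζ) * v ζ) ^ 2) := by
  have hvη : IntervalIntegrable v volume 0 η :=
    hv.mono_set (uIcc_subset_uIcc left_mem_uIcc (by rwa [uIcc_of_le (hη.1.trans hη.2)]))
  obtain ⟨hG0, hGle⟩ := integral_sub_mul_mem_Icc hv_nonneg hvη hη.1
  have hV0 : 0 ≤ ∫ t in (0:ℝ)..η, v t := integral_nonneg hη.1 fun t _ => hv_nonneg t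
  have hVle : ∫ t in (0:ℝ)..η, v t ≤ ∫ t in (0:ℝ)..ξ, v t :=
    integral_mono_interval le_rfl hη.1 hη.2 (Filter.Eventually.of_forall hv_nonneg) hv
  set G := ∫ ζ in (0:ℝ)..η, (η - ζ) * v ζ
  set V := ∫ t in (0:ℝ)..η, v t
  set T := ∫ t in (0:ℝ)..ξ, v t
  have hGV : G ≤ η * V := by simpa using hGle
  have hsum : G + v η * G ≤ T * η + ξ * (v η * V) := by
    have hvG : v η * G ≤ v η * (η * V) := mul_le_mul_of_nonneg_left hGV (hv_nonneg η)
    nlinarith [mul_le_mul_of_nonneg_left hVle hη.1, mul_nonneg (hv_nonneg η) hV0, hη.2]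
  have hg : 0 ≤ Mu / 2 * G := mul_nonneg (by linarith) hG0
  calc integrandMinorant Mu ξ v η = (1 + v η) / 2 - Mu / 2 * (T * η + ξ * (v η * V)) := rfl
    _ ≤ (1 + v η) / 2 * (1 - 2 * (Mu / 2 * G)) := by
        nlinarith [mul_le_mul_of_nonneg_left hsum hMu]
    _ ≤ (1 + v η) / 2 * ((1 + Mu / 2 * G) ^ 2)⁻¹ :=
        mul_le_mul_of_nonneg_left (one_sub_two_mul_le_inv_one_add_sq hg)
          (by linarith [hv_nonneg η])
    _ = (1 + v η) / (2 * (1 + Mu / 2 * G) ^ 2) := by field_simp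

theorem intervalIntegrable_integrandMinorant (hv : IntervalIntegrable v volume 0 ξ) :
    IntervalIntegrable (integrandMinorant Mu ξ v) volume 0 ξ :=
  ((intervalIntegrable_const.add hv).div_const 2).sub
    ((((continuous_const.mul continuous_id).intervalIntegrable _ _).add
      (hv.mul_primitive.const_mul ξ)).const_mul _)

theorem integral_integrandMinorant (hv : IntervalIntegrable v volume 0 ξ) :
    ∫ η in (0:ℝ)..ξ, integrandMinorant Mu ξ v η
      = ξ / 2 + (∫ t in (0:ℝ)..ξ, v t) / 2
        - Mu / 2 * ((∫ t in (0:ℝ)..ξ, v t) * (ξ ^ 2 / 2)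
          + ξ * ((∫ t in (0:ℝ)..ξ, v t) ^ 2 / 2)) := by
  have h1 : IntervalIntegrable (fun η => 1 + v η) volume 0 ξ := intervalIntegrable_const.add hv
  have h2 : IntervalIntegrable (fun η => (∫ t in (0:ℝ)..ξ, v t) * η) volume 0 ξ :=
    (continuous_const.mul continuous_id).intervalIntegrable _ _
  have h3 : IntervalIntegrable (fun η => ξ * (v η * ∫ t in (0:ℝ)..η, v t)) volume 0 ξ :=
    hv.mul_primitive.const_mul ξ
  unfold integrandMinorant
  rw [integral_sub (h1.div_const 2) ((h2.add h3).const_mul _), intervalIntegral.integral_div,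
    integral_add intervalIntegrable_const hv, intervalIntegral.integral_const_mul,
    integral_add h2 h3, intervalIntegral.integral_const_mul, intervalIntegral.integral_const_mul,
    integral_id, integral_mul_primitive hv, intervalIntegral.integral_const, smul_eq_mul]
  ring

end

/-- Lemma 2 of the paper: the lower bound `d` on the displacement satisfies
`d(ξ) ≥ Δ₀(ξ) [1 − (M_u/2) ξ² − M_u ξ Δ₀(ξ)]`. -/
theorem d_easy_lower_bound
    (Mu ξ : ℝ) (hMu : 0 ≤ Mu) (hξ : 0 ≤ ξ)
    (v : ℝ → ℝ) (hv_nonneg : ∀ x, 0 ≤ v x)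
    (hv : IntervalIntegrable v MeasureTheory.volume 0 ξ) :
    ((∫ η in (0:ℝ)..ξ,
        (1 + v η) / (2 * (1 + (Mu / 2) * ∫ ζ in (0:ℝ)..η, (η - ζ) * v ζ)^2))
      - ξ / 2)
    ≥ ((1/2) * ∫ η in (0:ℝ)..ξ, v η) *
        (1 - (Mu / 2) * ξ^2 - Mu * ξ * ((1/2) * ∫ η in (0:ℝ)..ξ, v η)) := by
  calc ((1/2) * ∫ η in (0:ℝ)..ξ, v η) *
        (1 - (Mu / 2) * ξ^2 - Mu * ξ * ((1/2) * ∫ η in (0:ℝ)..ξ, v η))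
      = (∫ η in (0:ℝ)..ξ, integrandMinorant Mu ξ v η) - ξ / 2 := by
        rw [integral_integrandMinorant hv]; ring
    _ ≤ _ := sub_le_sub_right (integral_mono_on hξ (intervalIntegrable_integrandMinorant hv)
        (intervalIntegrable_div_sq_one_add_integral_sub_mul hMu hξ hv_nonneg hv)
        fun η hη => integrandMinorant_le hMu hv_nonneg hv hη) _
end

section
/- Let M_u ≥ 0, l > 0, and let v : ℝ → ℝ be nonnegative and integrable on [0, l]. Define Δ₀(ξ) := (1/2) ∫₀^ξ v(η) dη, g(η) := (M_u/2) ∫₀^η (η − ζ) v(ζ) dζ, and d(ξ) := ∫₀^ξ (1 + v(η))/(2 (1 + g(η))²) dη − ξ/2. If M_u l² (1 + 2 Δ₀(l)/l) ≤ 2, then d(ξ) ≥ 0 for all ξ ∈ [0, l]. -/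
open MeasureTheory intervalIntegral Real Set

lemma tri_swap (b : ℝ) (hb : 0 ≤ b) (f h : ℝ → ℝ)
    (hf : IntervalIntegrable f volume 0 b) (hh : IntervalIntegrable h volume 0 b) :
    (∫ η in (0:ℝ)..b, f η * ∫ ζ in (0:ℝ)..η, h ζ)
      = ∫ ζ in (0:ℝ)..b, (∫ η in ζ..b, f η) * h ζ := by
  have hfI : IntegrableOn f (Ioc 0 b) volume :=
    (intervalIntegrable_iff_integrableOn_Ioc_of_le hb).mp hf
  have hhI : IntegrableOn h (Ioc 0 b) volume :=
    (intervalIntegrable_iff_integrableOn_Ioc_of_le hb).mp hh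
  set μ := volume.restrict (Ioc (0:ℝ) b)
  have hT : Integrable (fun p : ℝ × ℝ => if p.2 ≤ p.1 then f p.1 * h p.2 else 0) (μ.prod μ) := by
    have hbase : Integrable (fun p : ℝ × ℝ => f p.1 * h p.2) (μ.prod μ) :=
      hfI.mul_prod hhI
    have hmeas : MeasurableSet {p : ℝ × ℝ | p.2 ≤ p.1} :=
      measurableSet_le measurable_snd measurable_fst
    have : (fun p : ℝ × ℝ => if p.2 ≤ p.1 then f p.1 * h p.2 else 0)
        = Set.indicator {p : ℝ × ℝ | p.2 ≤ p.1} (fun p => f p.1 * h p.2) := by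
      ext p; simp [Set.indicator_apply, Set.mem_setOf_eq]
    rw [this]
    exact hbase.indicator hmeas
  have swap' := MeasureTheory.integral_integral_swap
    (f := fun η ζ => if ζ ≤ η then f η * h ζ else 0) (μ := μ) (ν := μ) hT
  rw [intervalIntegral.integral_of_le hb, intervalIntegral.integral_of_le hb]
  have lhs_eq : (∫ η in Ioc (0:ℝ) b, f η * ∫ ζ in (0:ℝ)..η, h ζ)
      = ∫ η, (∫ ζ, (if ζ ≤ η then f η * h ζ else 0) ∂μ) ∂μ := by
    refine setIntegral_congr_fun measurableSet_Ioc (fun η hη => ?_)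
    have h1 : (fun ζ => if ζ ≤ η then f η * h ζ else 0)
        = Set.indicator (Iic η) (fun ζ => f η * h ζ) := by
      ext ζ; simp [Set.indicator_apply]
    rw [h1, MeasureTheory.setIntegral_indicator measurableSet_Iic,
      Ioc_inter_Iic, min_eq_right hη.2, MeasureTheory.integral_const_mul,
      intervalIntegral.integral_of_le hη.1.le]
  have rhs_eq : (∫ ζ in Ioc (0:ℝ) b, (∫ η in ζ..b, f η) * h ζ)
      = ∫ ζ, (∫ η, (if ζ ≤ η then f η * h ζ else 0) ∂μ) ∂μ := by
    refine setIntegral_congr_fun measurableSet_Ioc (fun ζ hζ => ?_)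
    have h1 : (fun η => if ζ ≤ η then f η * h ζ else 0)
        = Set.indicator (Ici ζ) (fun η => f η * h ζ) := by
      ext η; simp [Set.indicator_apply]
    have h2 : Ioc (0:ℝ) b ∩ Ici ζ = Icc ζ b := by
      ext x
      simp only [Set.mem_inter_iff, Set.mem_Ioc, Set.mem_Ici, Set.mem_Icc]
      constructor
      · rintro ⟨⟨_, hxb⟩, hx⟩; exact ⟨hx, hxb⟩
      · rintro ⟨h1', h2'⟩; exact ⟨⟨lt_of_lt_of_le hζ.1 h1', h2'⟩, h1'⟩
    rw [h1, MeasureTheory.setIntegral_indicator measurableSet_Ici, h2,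
      MeasureTheory.integral_Icc_eq_integral_Ioc, MeasureTheory.integral_mul_const,
      intervalIntegral.integral_of_le hζ.2]
  rw [lhs_eq, rhs_eq, swap']

/-- The easily computable strict short-pulse condition (ShortPulse2):
if `M_u l² (1 + 2Δ₀(l)/l) ≤ 2` then the displacement lower bound `d`
is nonnegative on the whole pulse support `[0, l]`. -/
theorem shortPulse2_implies_d_nonneg
    (Mu l : ℝ) (hMu : 0 ≤ Mu) (hl : 0 < l)
    (v : ℝ → ℝ) (hv_nonneg : ∀ x, 0 ≤ v x)
    (hv : IntervalIntegrable v MeasureTheory.volume 0 l)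
    (hcond : Mu * l^2 * (1 + 2 * ((1/2) * ∫ η in (0:ℝ)..l, v η) / l) ≤ 2) :
    ∀ ξ ∈ Set.Icc (0:ℝ) l,
      0 ≤ (∫ η in (0:ℝ)..ξ,
            (1 + v η) / (2 * (1 + (Mu / 2) * ∫ ζ in (0:ℝ)..η, (η - ζ) * v ζ)^2))
          - ξ / 2 := by
  intro ξ hξ
  obtain ⟨hξ0, hξl⟩ := hξ
  -- basic integrability on subintervals
  have hvsub : ∀ a b : ℝ, a ∈ Icc (0:ℝ) l → b ∈ Icc (0:ℝ) l →
      IntervalIntegrable v volume a b := by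
    intro a b ha hb
    refine hv.mono_set ?_
    rw [Set.uIcc_of_le hl.le]
    exact Set.uIcc_subset_Icc ha hb
  have h0mem : (0:ℝ) ∈ Icc (0:ℝ) l := ⟨le_rfl, hl.le⟩
  have hξmem : ξ ∈ Icc (0:ℝ) l := ⟨hξ0, hξl⟩
  have hmem : ∀ η ∈ Icc (0:ℝ) ξ, η ∈ Icc (0:ℝ) l :=
    fun η hη => ⟨hη.1, hη.2.trans hξl⟩
  have hvξ : IntervalIntegrable v volume 0 ξ := hvsub 0 ξ h0mem hξmem
  -- monotonicity and nonnegativity of V t = ∫₀^t v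
  have hVmono : ∀ a b : ℝ, a ∈ Icc (0:ℝ) l → b ∈ Icc (0:ℝ) l → a ≤ b →
      (∫ η in (0:ℝ)..a, v η) ≤ ∫ η in (0:ℝ)..b, v η := by
    intro a b ha hb hab
    have h1 : (∫ η in (0:ℝ)..b, v η) - ∫ η in (0:ℝ)..a, v η = ∫ η in a..b, v η :=
      integral_interval_sub_left (hvsub 0 b h0mem hb) (hvsub 0 a h0mem ha)
    have h2 : 0 ≤ ∫ η in a..b, v η :=
      intervalIntegral.integral_nonneg hab fun x _ => hv_nonneg x
    linarith
  have hVnonneg : ∀ t ∈ Icc (0:ℝ) l, 0 ≤ ∫ η in (0:ℝ)..t, v η := by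
    intro t ht
    have := hVmono 0 t h0mem ht ht.1
    simpa using this
  -- continuity of primitives
  have hVcont : ContinuousOn (fun t => ∫ η in (0:ℝ)..t, v η) (Icc 0 l) := by
    have := intervalIntegral.continuousOn_primitive_interval' hv
      (by rw [Set.uIcc_of_le hl.le]; exact h0mem)
    rwa [Set.uIcc_of_le hl.le] at this
  have hzv : ∀ a b : ℝ, a ∈ Icc (0:ℝ) l → b ∈ Icc (0:ℝ) l →
      IntervalIntegrable (fun ζ => ζ * v ζ) volume a b :=
    fun a b ha hb => (hvsub a b ha hb).continuousOn_mul continuous_id.continuousOn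
  have hPcont : ContinuousOn (fun t => ∫ ζ in (0:ℝ)..t, ζ * v ζ) (Icc 0 l) := by
    have := intervalIntegral.continuousOn_primitive_interval' (hzv 0 l h0mem ⟨hl.le, le_rfl⟩)
      (by rw [Set.uIcc_of_le hl.le]; exact h0mem)
    rwa [Set.uIcc_of_le hl.le] at this
  -- I η := ∫₀^η (η-ζ) v ζ : decomposition, continuity, nonnegativity
  have hI_eq : ∀ η ∈ Icc (0:ℝ) l,
      (∫ ζ in (0:ℝ)..η, (η - ζ) * v ζ)
        = η * (∫ ζ in (0:ℝ)..η, v ζ) - ∫ ζ in (0:ℝ)..η, ζ * v ζ := by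
    intro η hη
    have h1 : (∫ ζ in (0:ℝ)..η, (η - ζ) * v ζ)
        = ∫ ζ in (0:ℝ)..η, (η * v ζ - ζ * v ζ) := by
      apply intervalIntegral.integral_congr
      intro ζ _; ring
    rw [h1, intervalIntegral.integral_sub ((hvsub 0 η h0mem hη).const_mul η)
      (hzv 0 η h0mem hη), intervalIntegral.integral_const_mul]
  have hIcont : ContinuousOn (fun η => ∫ ζ in (0:ℝ)..η, (η - ζ) * v ζ) (Icc 0 l) := by
    refine ContinuousOn.congr ((continuousOn_id.mul hVcont).sub hPcont) ?_
    intro η hη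
    exact hI_eq η hη
  have hInonneg : ∀ η ∈ Icc (0:ℝ) l, 0 ≤ ∫ ζ in (0:ℝ)..η, (η - ζ) * v ζ := by
    intro η hη
    apply intervalIntegral.integral_nonneg hη.1
    intro ζ hζ
    exact mul_nonneg (by linarith [hζ.2]) (hv_nonneg ζ)
  have hIccsub : Icc (0:ℝ) ξ ⊆ Icc (0:ℝ) l := Icc_subset_Icc le_rfl hξl
  have hIcontξ : ContinuousOn (fun η => ∫ ζ in (0:ℝ)..η, (η - ζ) * v ζ) (uIcc 0 ξ) := by
    rw [Set.uIcc_of_le hξ0]; exact hIcont.mono hIccsub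
  have hVcontξ : ContinuousOn (fun t => ∫ η in (0:ℝ)..t, v η) (uIcc 0 ξ) := by
    rw [Set.uIcc_of_le hξ0]; exact hVcont.mono hIccsub
  -- pointwise bound I η ≤ ξ * V η on [0, ξ]
  have hIle : ∀ η ∈ Icc (0:ℝ) ξ,
      (∫ ζ in (0:ℝ)..η, (η - ζ) * v ζ) ≤ ξ * ∫ ζ in (0:ℝ)..η, v ζ := by
    intro η hη
    have h1 : (∫ ζ in (0:ℝ)..η, (η - ζ) * v ζ) ≤ ∫ ζ in (0:ℝ)..η, ξ * v ζ := by
      apply intervalIntegral.integral_mono_on hη.1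
      · exact (hvsub 0 η h0mem (hmem η hη)).continuousOn_mul
          (continuous_const.sub continuous_id).continuousOn
      · exact (hvsub 0 η h0mem (hmem η hη)).const_mul ξ
      · intro ζ hζ
        have : η - ζ ≤ ξ := by linarith [hη.2, hζ.1]
        exact mul_le_mul_of_nonneg_right this (hv_nonneg ζ)
    rwa [intervalIntegral.integral_const_mul] at h1
  -- Step A: pointwise lower bound for the main integrand
  have hgpt : ∀ η ∈ Icc (0:ℝ) ξ,
      1/2 + v η / 2 - (1 + v η) * ((Mu/2) * ∫ ζ in (0:ℝ)..η, (η - ζ) * v ζ)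
        ≤ (1 + v η) / (2 * (1 + (Mu / 2) * ∫ ζ in (0:ℝ)..η, (η - ζ) * v ζ)^2) := by
    intro η hη
    have hG : 0 ≤ (Mu/2) * ∫ ζ in (0:ℝ)..η, (η - ζ) * v ζ :=
      mul_nonneg (by linarith) (hInonneg η (hmem η hη))
    set G := (Mu/2) * ∫ ζ in (0:ℝ)..η, (η - ζ) * v ζ with hGdef
    have ha := hv_nonneg η
    rw [le_div_iff₀ (by positivity)]
    nlinarith [mul_nonneg hG hG, mul_nonneg (mul_nonneg hG hG) hG,
      mul_nonneg (mul_nonneg ha hG) hG, mul_nonneg (mul_nonneg (mul_nonneg ha hG) hG) hG]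
  -- integrability of the two integrands on [0, ξ]
  have h1v : IntervalIntegrable (fun η => 1 + v η) volume 0 ξ :=
    (_root_.intervalIntegrable_const (c := (1:ℝ))).add hvξ
  have hint_lhs : IntervalIntegrable
      (fun η => 1/2 + v η / 2 - (1 + v η) * ((Mu/2) * ∫ ζ in (0:ℝ)..η, (η - ζ) * v ζ))
      volume 0 ξ := by
    apply IntervalIntegrable.sub
    · exact (_root_.intervalIntegrable_const (c := (1:ℝ)/2)).add (hvξ.div_const 2)
    · exact h1v.mul_continuousOn (continuousOn_const.mul hIcontξ)
  have hint_rhs : IntervalIntegrable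
      (fun η => (1 + v η) / (2 * (1 + (Mu / 2) * ∫ ζ in (0:ℝ)..η, (η - ζ) * v ζ)^2))
      volume 0 ξ := by
    have hden : ContinuousOn
        (fun η => (2 * (1 + (Mu / 2) * ∫ ζ in (0:ℝ)..η, (η - ζ) * v ζ)^2)⁻¹) (uIcc 0 ξ) := by
      apply ContinuousOn.inv₀
      · exact (continuousOn_const.mul ((continuousOn_const.add (continuousOn_const.mul hIcontξ)).pow 2))
      · intro η hη
        have hη' : η ∈ Icc (0:ℝ) l := by
          rw [Set.uIcc_of_le hξ0] at hη; exact hmem η hη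
        have hG : 0 ≤ (Mu/2) * ∫ ζ in (0:ℝ)..η, (η - ζ) * v ζ :=
          mul_nonneg (by linarith) (hInonneg η hη')
        positivity
    have := h1v.mul_continuousOn hden
    simpa [div_eq_mul_inv] using this
  -- Step A: integral comparison
  have hA : (∫ η in (0:ℝ)..ξ,
        (1/2 + v η / 2 - (1 + v η) * ((Mu/2) * ∫ ζ in (0:ℝ)..η, (η - ζ) * v ζ)))
      ≤ ∫ η in (0:ℝ)..ξ,
        (1 + v η) / (2 * (1 + (Mu / 2) * ∫ ζ in (0:ℝ)..η, (η - ζ) * v ζ)^2) :=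
    intervalIntegral.integral_mono_on hξ0 hint_lhs hint_rhs hgpt
  -- Step B: evaluate the lower integral
  have hintI : IntervalIntegrable (fun η => ∫ ζ in (0:ℝ)..η, (η - ζ) * v ζ) volume 0 ξ :=
    hIcontξ.intervalIntegrable
  have hintvI : IntervalIntegrable
      (fun η => v η * ∫ ζ in (0:ℝ)..η, (η - ζ) * v ζ) volume 0 ξ :=
    hvξ.mul_continuousOn hIcontξ
  have hB : (∫ η in (0:ℝ)..ξ,
        (1/2 + v η / 2 - (1 + v η) * ((Mu/2) * ∫ ζ in (0:ℝ)..η, (η - ζ) * v ζ)))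
      = ξ/2 + (∫ η in (0:ℝ)..ξ, v η)/2
        - ((Mu/2) * (∫ η in (0:ℝ)..ξ, ∫ ζ in (0:ℝ)..η, (η - ζ) * v ζ)
           + (Mu/2) * ∫ η in (0:ℝ)..ξ, v η * ∫ ζ in (0:ℝ)..η, (η - ζ) * v ζ) := by
    have e1 : (∫ η in (0:ℝ)..ξ,
          (1/2 + v η / 2 - (1 + v η) * ((Mu/2) * ∫ ζ in (0:ℝ)..η, (η - ζ) * v ζ)))
        = ∫ η in (0:ℝ)..ξ,
          ((1/2 + v η / 2)
            - ((Mu/2) * (∫ ζ in (0:ℝ)..η, (η - ζ) * v ζ)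
               + (Mu/2) * (v η * ∫ ζ in (0:ℝ)..η, (η - ζ) * v ζ))) := by
      apply intervalIntegral.integral_congr
      intro η _; ring
    rw [e1, intervalIntegral.integral_sub
        ((_root_.intervalIntegrable_const (c := (1:ℝ)/2)).add (hvξ.div_const 2))
        ((hintI.const_mul (Mu/2)).add (hintvI.const_mul (Mu/2))),
      intervalIntegral.integral_add (_root_.intervalIntegrable_const (c := (1:ℝ)/2)) (hvξ.div_const 2),
      intervalIntegral.integral_add (hintI.const_mul (Mu/2)) (hintvI.const_mul (Mu/2)),
      intervalIntegral.integral_const_mul, intervalIntegral.integral_const_mul,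
      intervalIntegral.integral_div, intervalIntegral.integral_const]
    simp
  -- Step C: bound on ∫ I
  have hidint : IntervalIntegrable (fun η : ℝ => η * ∫ ζ in (0:ℝ)..η, v ζ) volume 0 ξ :=
    (continuousOn_id.mul hVcontξ).intervalIntegrable
  have hPint : IntervalIntegrable (fun η : ℝ => ∫ ζ in (0:ℝ)..η, ζ * v ζ) volume 0 ξ := by
    apply ContinuousOn.intervalIntegrable
    rw [Set.uIcc_of_le hξ0]; exact hPcont.mono hIccsub
  have hzvξ : IntervalIntegrable (fun ζ => ζ * v ζ) volume 0 ξ := hzv 0 ξ h0mem hξmem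
  have c1 : (∫ η in (0:ℝ)..ξ, ∫ ζ in (0:ℝ)..η, (η - ζ) * v ζ)
      = (∫ η in (0:ℝ)..ξ, η * ∫ ζ in (0:ℝ)..η, v ζ)
        - ∫ η in (0:ℝ)..ξ, ∫ ζ in (0:ℝ)..η, ζ * v ζ := by
    rw [← intervalIntegral.integral_sub hidint hPint]
    apply intervalIntegral.integral_congr
    intro η hη
    rw [Set.uIcc_of_le hξ0] at hη
    exact hI_eq η (hmem η hη)
  have t1 : (∫ η in (0:ℝ)..ξ, η * ∫ ζ in (0:ℝ)..η, v ζ)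
      = ∫ ζ in (0:ℝ)..ξ, ((ξ^2 - ζ^2)/2) * v ζ := by
    calc (∫ η in (0:ℝ)..ξ, η * ∫ ζ in (0:ℝ)..η, v ζ)
        = ∫ η in (0:ℝ)..ξ, (fun x : ℝ => x) η * ∫ ζ in (0:ℝ)..η, v ζ := rfl
      _ = ∫ ζ in (0:ℝ)..ξ, (∫ η in ζ..ξ, (fun x : ℝ => x) η) * v ζ :=
          tri_swap ξ hξ0 (fun x => x) v
            (continuous_id.continuousOn.intervalIntegrable) hvξ
      _ = ∫ ζ in (0:ℝ)..ξ, ((ξ^2 - ζ^2)/2) * v ζ := by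
          apply intervalIntegral.integral_congr
          intro ζ _
          beta_reduce
          rw [integral_id]
  have t2 : (∫ η in (0:ℝ)..ξ, ∫ ζ in (0:ℝ)..η, ζ * v ζ)
      = ∫ ζ in (0:ℝ)..ξ, (ξ - ζ) * (ζ * v ζ) := by
    calc (∫ η in (0:ℝ)..ξ, ∫ ζ in (0:ℝ)..η, ζ * v ζ)
        = ∫ η in (0:ℝ)..ξ, (fun _ : ℝ => (1:ℝ)) η * ∫ ζ in (0:ℝ)..η, ζ * v ζ := by
          apply intervalIntegral.integral_congr
          intro η _
          simp
      _ = ∫ ζ in (0:ℝ)..ξ, (∫ η in ζ..ξ, (fun _ : ℝ => (1:ℝ)) η) * (ζ * v ζ) :=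
          tri_swap ξ hξ0 (fun _ => (1:ℝ)) (fun ζ => ζ * v ζ)
            _root_.intervalIntegrable_const hzvξ
      _ = ∫ ζ in (0:ℝ)..ξ, (ξ - ζ) * (ζ * v ζ) := by
          apply intervalIntegral.integral_congr
          intro ζ _
          beta_reduce
          rw [_root_.intervalIntegral.integral_const]
          simp
  have hquad : IntervalIntegrable (fun ζ => ((ξ^2 - ζ^2)/2) * v ζ) volume 0 ξ :=
    hvξ.continuousOn_mul (by fun_prop)
  have hlin : IntervalIntegrable (fun ζ => (ξ - ζ) * (ζ * v ζ)) volume 0 ξ :=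
    hzvξ.continuousOn_mul (by fun_prop)
  have c2 : (∫ η in (0:ℝ)..ξ, ∫ ζ in (0:ℝ)..η, (η - ζ) * v ζ)
      = ∫ ζ in (0:ℝ)..ξ, (((ξ^2 - ζ^2)/2) - (ξ - ζ) * ζ) * v ζ := by
    rw [c1, t1, t2, ← intervalIntegral.integral_sub hquad hlin]
    apply intervalIntegral.integral_congr
    intro ζ _; ring
  have hC : (∫ η in (0:ℝ)..ξ, ∫ ζ in (0:ℝ)..η, (η - ζ) * v ζ)
      ≤ ξ^2/2 * ∫ ζ in (0:ℝ)..ξ, v ζ := by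
    rw [c2, ← intervalIntegral.integral_const_mul]
    apply intervalIntegral.integral_mono_on hξ0
    · exact hvξ.continuousOn_mul (by fun_prop)
    · exact hvξ.const_mul _
    · intro ζ hζ
      have h1 : ((ξ^2 - ζ^2)/2 - (ξ - ζ) * ζ) = (ξ - ζ)^2/2 := by ring
      rw [h1]
      apply mul_le_mul_of_nonneg_right _ (hv_nonneg ζ)
      nlinarith [hζ.1, hζ.2]
  -- Step D: bound on ∫ v I
  have hvV : IntervalIntegrable (fun η => v η * ∫ ζ in (0:ℝ)..η, v ζ) volume 0 ξ :=
    hvξ.mul_continuousOn hVcontξ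
  have d3 : (∫ η in (0:ℝ)..ξ, v η * ∫ ζ in (0:ℝ)..η, v ζ)
      = (∫ η in (0:ℝ)..ξ, v η)^2 / 2 := by
    have ts := tri_swap ξ hξ0 v v hvξ hvξ
    have e1 : (∫ ζ in (0:ℝ)..ξ, (∫ η in ζ..ξ, v η) * v ζ)
        = ∫ ζ in (0:ℝ)..ξ, ((∫ η in (0:ℝ)..ξ, v η) * v ζ - v ζ * ∫ η in (0:ℝ)..ζ, v η) := by
      apply intervalIntegral.integral_congr
      intro ζ hζ
      rw [Set.uIcc_of_le hξ0] at hζ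
      have h := integral_interval_sub_left hvξ (hvsub 0 ζ h0mem (hmem ζ hζ))
      beta_reduce
      rw [← h]; ring
    rw [e1, intervalIntegral.integral_sub (hvξ.const_mul _) hvV,
      intervalIntegral.integral_const_mul] at ts
    nlinarith [ts]
  have d1 : (∫ η in (0:ℝ)..ξ, v η * ∫ ζ in (0:ℝ)..η, (η - ζ) * v ζ)
      ≤ ξ * ((∫ η in (0:ℝ)..ξ, v η)^2 / 2) := by
    have hmono : (∫ η in (0:ℝ)..ξ, v η * ∫ ζ in (0:ℝ)..η, (η - ζ) * v ζ)
        ≤ ∫ η in (0:ℝ)..ξ, ξ * (v η * ∫ ζ in (0:ℝ)..η, v ζ) := by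
      apply intervalIntegral.integral_mono_on hξ0 hintvI (hvV.const_mul ξ)
      intro η hη
      have h1 := hIle η hη
      have h2 := hv_nonneg η
      calc v η * ∫ ζ in (0:ℝ)..η, (η - ζ) * v ζ
          ≤ v η * (ξ * ∫ ζ in (0:ℝ)..η, v ζ) := mul_le_mul_of_nonneg_left h1 h2
        _ = ξ * (v η * ∫ ζ in (0:ℝ)..η, v ζ) := by ring
    rw [intervalIntegral.integral_const_mul, d3] at hmono
    exact hmono
  -- condition rewritten
  have hVξl : (∫ η in (0:ℝ)..ξ, v η) ≤ ∫ η in (0:ℝ)..l, v η :=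
    hVmono ξ l hξmem ⟨hl.le, le_rfl⟩ hξl
  have hVξ0 : 0 ≤ ∫ η in (0:ℝ)..ξ, v η := hVnonneg ξ hξmem
  have hVl0 : 0 ≤ ∫ η in (0:ℝ)..l, v η := hVnonneg l ⟨hl.le, le_rfl⟩
  have hcond' : Mu * l^2 + Mu * l * (∫ η in (0:ℝ)..l, v η) ≤ 2 := by
    have hl' : (l:ℝ) ≠ 0 := ne_of_gt hl
    have e : Mu * l^2 * (1 + 2 * ((1/2) * ∫ η in (0:ℝ)..l, v η) / l)
        = Mu * l^2 + Mu * l * ∫ η in (0:ℝ)..l, v η := by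
      field_simp
    rw [e] at hcond
    exact hcond
  -- assemble
  have key : (Mu/2) * (∫ η in (0:ℝ)..ξ, ∫ ζ in (0:ℝ)..η, (η - ζ) * v ζ)
      + (Mu/2) * (∫ η in (0:ℝ)..ξ, v η * ∫ ζ in (0:ℝ)..η, (η - ζ) * v ζ)
      ≤ (∫ η in (0:ℝ)..ξ, v η)/2 := by
    have hMu2 : 0 ≤ Mu/2 := by linarith
    have b1 : (Mu/2) * (∫ η in (0:ℝ)..ξ, ∫ ζ in (0:ℝ)..η, (η - ζ) * v ζ)
        ≤ (Mu/2) * (ξ^2/2 * ∫ ζ in (0:ℝ)..ξ, v ζ) := mul_le_mul_of_nonneg_left hC hMu2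
    have b2 : (Mu/2) * (∫ η in (0:ℝ)..ξ, v η * ∫ ζ in (0:ℝ)..η, (η - ζ) * v ζ)
        ≤ (Mu/2) * (ξ * ((∫ η in (0:ℝ)..ξ, v η)^2 / 2)) := mul_le_mul_of_nonneg_left d1 hMu2
    have b3 : Mu * ξ^2 ≤ Mu * l^2 :=
      mul_le_mul_of_nonneg_left (pow_le_pow_left₀ hξ0 hξl 2) hMu
    have b4 : Mu * ξ * (∫ η in (0:ℝ)..ξ, v η) ≤ Mu * l * (∫ η in (0:ℝ)..l, v η) :=
      mul_le_mul (mul_le_mul_of_nonneg_left hξl hMu) hVξl hVξ0 (mul_nonneg hMu hl.le)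
    have m1 := mul_le_mul_of_nonneg_right b3 hVξ0
    have m2 := mul_le_mul_of_nonneg_right b4 hVξ0
    have m3 := mul_le_mul_of_nonneg_right hcond' hVξ0
    linarith [b1, b2, m1, m2, m3]
  linarith [hA, hB, key]
end

section
/- Let L > 0, A ≥ 0 a constant, B : [0, L] → ℝ continuous and nonnegative, and V : [0, L] → ℝ differentiable with V ≥ 0, V(0) = 0, and V'(ξ) ≤ 2A √(V(ξ)) + 2 B(ξ) V(ξ) for all ξ ∈ [0, L]. Then √(V(ξ)) ≤ A ∫₀^ξ exp(∫_η^ξ B(ζ) dζ) dη for all ξ ∈ [0, L]. -/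
/-! The regularization `W = √(V + ε²)` is differentiable and, since `√V ≤ W` and `V ≤ W²`,
satisfies the linear differential inequality `W' = V' / (2W) ≤ A + B W` with `W(0) = ε`.
Multiplying by the integrating factor `exp (-∫₀^ξ B)` makes
`exp (-∫₀^ξ B) W(ξ) - A ∫₀^ξ exp (-∫₀^η B) dη` antitone, whence
`√V(ξ) ≤ W(ξ) ≤ ε exp (∫₀^ξ B) + A ∫₀^ξ exp (∫_η^ξ B) dη`; now let `ε → 0`. -/

open MeasureTheory intervalIntegral Real Set

theorem ContinuousOn.integral_hasDerivAt_right_of_mem_Ioo {a b x : ℝ} {g : ℝ → ℝ}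
    (hg : ContinuousOn g (Icc a b)) (hx : x ∈ Ioo a b) :
    HasDerivAt (fun y => ∫ t in a..y, g t) (g x) x :=
  integral_hasDerivAt_right
    ((hg.mono (Icc_subset_Icc_right hx.2.le)).intervalIntegrable_of_Icc hx.1.le)
    ((hg.mono Ioo_subset_Icc_self).stronglyMeasurableAtFilter isOpen_Ioo x hx)
    (hg.continuousAt (Icc_mem_nhds hx.1 hx.2))

theorem ContinuousOn.continuousOn_intervalIntegral_Icc {a b : ℝ} {g : ℝ → ℝ}
    (hg : ContinuousOn g (Icc a b)) : ContinuousOn (fun y => ∫ t in a..y, g t) (Icc a b) := by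
  rcases le_or_gt a b with hab | hba
  · rw [← uIcc_of_le hab] at hg ⊢
    exact continuousOn_primitive_interval (hg.integrableOn_compact isCompact_uIcc)
  · simp [Icc_eq_empty_of_lt hba]

theorem le_exp_integral_of_hasDerivAt_le_add_mul {a b : ℝ} {f B W W' : ℝ → ℝ}
    (hf : ContinuousOn f (Icc a b)) (hB : ContinuousOn B (Icc a b))
    (hW : ContinuousOn W (Icc a b)) (hW' : ∀ x ∈ Ioo a b, HasDerivAt W (W' x) x)
    (hle : ∀ x ∈ Ioo a b, W' x ≤ f x + B x * W x) {x : ℝ} (hx : x ∈ Icc a b) :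
    W x ≤ W a * exp (∫ t in a..x, B t) + ∫ η in a..x, f η * exp (∫ t in η..x, B t) := by
  set F := fun y => ∫ t in a..y, B t with hF_def
  set E := fun η => f η * exp (-F η) with hE_def
  have hF_cont : ContinuousOn F (Icc a b) := hB.continuousOn_intervalIntegral_Icc
  have hE_cont : ContinuousOn E (Icc a b) := hf.mul hF_cont.neg.rexp
  set u := fun y => exp (-F y) * W y - ∫ η in a..y, E η
  have hu : AntitoneOn u (Icc a b) := by
    refine antitoneOn_of_hasDerivWithinAt_nonpos
      (f' := fun y => exp (-F y) * (W' y - B y * W y - f y)) (convex_Icc a b)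
      ((hF_cont.neg.rexp.mul hW).sub hE_cont.continuousOn_intervalIntegral_Icc)
      (fun y hy => ?_) (fun y hy => ?_) <;> rw [interior_Icc] at hy
    · have hd := ((hB.integral_hasDerivAt_right_of_mem_Ioo hy).neg.exp.mul (hW' y hy)).sub
        (hE_cont.integral_hasDerivAt_right_of_mem_Ioo hy)
      refine (hd.congr_deriv ?_).hasDerivWithinAt
      simp only [hE_def, hF_def, Pi.neg_apply]
      ring
    · exact mul_nonpos_of_nonneg_of_nonpos (exp_pos _).le (by linarith [hle y hy])
  have hux : u x ≤ W a := by
    simpa [u, hF_def] using hu (left_mem_Icc.2 (hx.1.trans hx.2)) hx hx.1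
  have hB_int : ∀ y ∈ Icc a x, IntervalIntegrable B volume a y := fun y hy =>
    (hB.mono (Icc_subset_Icc_right (hy.2.trans hx.2))).intervalIntegrable_of_Icc hy.1
  have hfactor : exp (F x) * ∫ η in a..x, E η = ∫ η in a..x, f η * exp (∫ t in η..x, B t) := by
    rw [← intervalIntegral.integral_const_mul]
    refine integral_congr fun η hη => ?_
    rw [uIcc_of_le hx.1] at hη
    simp only [hE_def, hF_def, sub_eq_add_neg, exp_add,
      ← integral_interval_sub_left (hB_int x (right_mem_Icc.2 hx.1)) (hB_int η hη)]
    ring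
  calc W x = exp (F x) * (exp (-F x) * W x) := by
        rw [← mul_assoc, ← exp_add, add_neg_cancel, exp_zero, one_mul]
    _ ≤ exp (F x) * (W a + ∫ η in a..x, E η) := by gcongr; linarith
    _ = _ := by rw [mul_add, hfactor, mul_comm]

theorem div_two_mul_le_add_mul_of_le_sq {v w d A B : ℝ} (hw : 0 < w) (hvw : v ≤ w ^ 2)
    (hA : 0 ≤ A) (hB : 0 ≤ B) (hd : d ≤ 2 * A * √v + 2 * B * v) : d / (2 * w) ≤ A + B * w := by
  have hsqrt : √v ≤ w := by simpa [sqrt_sq hw.le] using sqrt_le_sqrt hvw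
  rw [div_le_iff₀ (by positivity)]
  nlinarith [mul_le_mul_of_nonneg_left hsqrt hA, mul_le_mul_of_nonneg_left hvw hB]

theorem sqrt_gronwall_general
    (L A : ℝ) (hA : 0 ≤ A)
    (B : ℝ → ℝ) (hB_cont : ContinuousOn B (Set.Icc (0:ℝ) L))
    (hB_nonneg : ∀ ξ ∈ Set.Icc (0:ℝ) L, 0 ≤ B ξ)
    (V : ℝ → ℝ)
    (hV_diff : ∀ ξ ∈ Set.Icc (0:ℝ) L, DifferentiableAt ℝ V ξ)
    (hV_nonneg : ∀ ξ ∈ Set.Icc (0:ℝ) L, 0 ≤ V ξ)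
    (hV0 : V 0 = 0)
    (hV' : ∀ ξ ∈ Set.Icc (0:ℝ) L,
      deriv V ξ ≤ 2 * A * Real.sqrt (V ξ) + 2 * B ξ * V ξ) :
    ∀ ξ ∈ Set.Icc (0:ℝ) L,
      Real.sqrt (V ξ) ≤ A * ∫ η in (0:ℝ)..ξ, Real.exp (∫ ζ in η..ξ, B ζ) := by
  intro ξ hξ
  have hV_cont : ContinuousOn V (Icc 0 L) := fun x hx =>
    (hV_diff x hx).continuousAt.continuousWithinAt
  have hregularized : ∀ ε > 0,
      √(V ξ) ≤ ε * exp (∫ t in 0..ξ, B t) + A * ∫ η in 0..ξ, exp (∫ t in η..ξ, B t) := by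
    intro ε hε
    have hpos : ∀ x ∈ Ioo 0 L, 0 < V x + ε ^ 2 := fun x hx => by
      have := hV_nonneg x (Ioo_subset_Icc_self hx); positivity
    have hW' : ∀ x ∈ Ioo 0 L, HasDerivAt (fun y => √(V y + ε ^ 2))
        (deriv V x / (2 * √(V x + ε ^ 2))) x := fun x hx =>
      ((hV_diff x (Ioo_subset_Icc_self hx)).hasDerivAt.add_const _).sqrt (hpos x hx).ne'
    have hle : ∀ x ∈ Ioo 0 L,
        deriv V x / (2 * √(V x + ε ^ 2)) ≤ A + B x * √(V x + ε ^ 2) := fun x hx =>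
      div_two_mul_le_add_mul_of_le_sq (sqrt_pos.2 (hpos x hx))
        (by rw [sq_sqrt (hpos x hx).le]; linarith [sq_nonneg ε]) hA
        (hB_nonneg x (Ioo_subset_Icc_self hx)) (hV' x (Ioo_subset_Icc_self hx))
    have hcomp := le_exp_integral_of_hasDerivAt_le_add_mul (f := fun _ => A)
      (W := fun y => √(V y + ε ^ 2))
      continuousOn_const hB_cont (hV_cont.add continuousOn_const).sqrt hW' hle hξ
    rw [hV0, zero_add, sqrt_sq hε.le, intervalIntegral.integral_const_mul] at hcomp
    exact (sqrt_le_sqrt (le_add_of_nonneg_right (sq_nonneg ε))).trans hcomp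
  refine le_of_forall_pos_le_add fun δ hδ => ?_
  have := hregularized (δ / exp (∫ t in 0..ξ, B t)) (by positivity)
  rwa [div_mul_cancel₀ _ (exp_pos _).ne', add_comm] at this

/-- Square-root Gronwall (comparison-principle) estimate: if `V ≥ 0`,
`V(0) = 0` and `V' ≤ 2A√V + 2BV` on `[0, L]`, then
`√(V(ξ)) ≤ A ∫₀^ξ exp(∫_η^ξ B) dη`. -/
theorem sqrt_gronwall
    (L A : ℝ) (hL : 0 < L) (hA : 0 ≤ A)
    (B : ℝ → ℝ) (hB_cont : ContinuousOn B (Set.Icc (0:ℝ) L))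
    (hB_nonneg : ∀ ξ ∈ Set.Icc (0:ℝ) L, 0 ≤ B ξ)
    (V : ℝ → ℝ)
    (hV_diff : ∀ ξ ∈ Set.Icc (0:ℝ) L, DifferentiableAt ℝ V ξ)
    (hV_nonneg : ∀ ξ ∈ Set.Icc (0:ℝ) L, 0 ≤ V ξ)
    (hV0 : V 0 = 0)
    (hV' : ∀ ξ ∈ Set.Icc (0:ℝ) L,
      deriv V ξ ≤ 2 * A * Real.sqrt (V ξ) + 2 * B ξ * V ξ) :
    ∀ ξ ∈ Set.Icc (0:ℝ) L,
      Real.sqrt (V ξ) ≤ A * ∫ η in (0:ℝ)..ξ, Real.exp (∫ ζ in η..ξ, B ζ) :=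
  sqrt_gronwall_general L A hA B hB_cont hB_nonneg V hV_diff hV_nonneg hV0 hV'
end

section
/- Let L > 0, K > 0, l > 0, β > 0, and let κ, ň : [0, L] → ℝ be continuous with κ ≥ 0, and N₀ ∈ ℝ. Let ε, σ : [0, L] → ℝ be differentiable with ε(0) = σ(0) = 0, ε'(ξ) = −κ(ξ) σ(ξ), and σ'(ξ) = K l (ň(ξ) − N₀ + ň(ξ) ε(ξ)) on [0, L]. Define B(ξ) := |β K l ň(ξ) − κ(ξ)|/(2√β) and let A ≥ K l √β · sup_{ξ ∈ [0,L]} |ň(ξ) − N₀|. Then |ε(ξ)| ≤ A ∫₀^ξ exp(∫_η^ξ B(ζ) dζ) dη for all ξ ∈ [0, L]. -/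
/-! The regularized energy `W = √(ε² + β σ² + δ²)` satisfies `W' ≤ B W + A` along the linearized
system: in `W W' = ε σ (β K l ň - κ) + β K l σ (ň - N₀)` the first term is absorbed by AM–GM,
`2 √β |ε σ| ≤ ε² + β σ²`, and the second by `√β |σ| ≤ W`. The linear Gronwall inequality with
variable coefficient, proved with the integrating factor `exp (-∫ B)`, then bounds `|ε| ≤ W` by
`exp (∫₀^ξ B) δ + A ∫₀^ξ exp (∫_η^ξ B) dη`; the regularization `δ > 0` keeps the square root
differentiable and is sent to `0` at the end. -/

open intervalIntegral Real Set

/-- The solution at `x` of `y' = B y + A`, `y a = δ`. -/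
noncomputable def linearGronwallBound (B : ℝ → ℝ) (a δ A x : ℝ) : ℝ :=
  exp (∫ t in a..x, B t) * δ + A * ∫ η in a..x, exp (∫ t in η..x, B t)

lemma linearGronwallBound_congr {B B' : ℝ → ℝ} {a δ A x : ℝ} (hax : a ≤ x)
    (h : EqOn B B' (Icc a x)) :
    linearGronwallBound B a δ A x = linearGronwallBound B' a δ A x := by
  have h_int : ∀ η ∈ Icc a x, ∫ t in η..x, B t = ∫ t in η..x, B' t := fun η hη =>
    integral_congr fun t ht => h ⟨hη.1.trans (uIcc_of_le hη.2 ▸ ht).1, (uIcc_of_le hη.2 ▸ ht).2⟩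
  unfold linearGronwallBound
  rw [h_int a ⟨le_rfl, hax⟩]
  congr 2
  exact integral_congr fun η hη => by simp only [h_int η (uIcc_of_le hax ▸ hη)]

lemma continuous_linearGronwallBound_initial (B : ℝ → ℝ) (a A x : ℝ) :
    Continuous fun δ => linearGronwallBound B a δ A x := by
  unfold linearGronwallBound; fun_prop

theorem le_linearGronwallBound_of_continuous {f f' B : ℝ → ℝ} {a b A : ℝ} (hB : Continuous B)
    (hf : ∀ x ∈ Icc a b, HasDerivAt f (f' x) x)
    (hf' : ∀ x ∈ Icc a b, f' x ≤ B x * f x + A) :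
    ∀ x ∈ Icc a b, f x ≤ linearGronwallBound B a (f a) A x := by
  set I : ℝ → ℝ := fun x => ∫ t in a..x, B t
  have hI : ∀ x, HasDerivAt I (B x) x := fun x => (hB.integral_hasStrictDerivAt a x).hasDerivAt
  have hE : Continuous fun x => exp (-I x) :=
    (continuous_iff_continuousAt.2 fun x => (hI x).continuousAt).neg.rexp
  set G : ℝ → ℝ := fun u => f u * exp (-I u) - A * ∫ η in a..u, exp (-I η)
  have hG : ∀ x ∈ Icc a b, HasDerivAt G ((f' x - B x * f x - A) * exp (-I x)) x :=
    fun x hx => ((hf x hx).fun_mul (hI x).fun_neg.exp).fun_sub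
      ((hE.integral_hasStrictDerivAt a x).hasDerivAt.const_mul A) |>.congr_deriv (by ring)
  have hG_anti : AntitoneOn G (Icc a b) :=
    antitoneOn_of_hasDerivWithinAt_nonpos (convex_Icc a b)
      (fun x hx => (hG x hx).continuousAt.continuousWithinAt)
      (fun x hx => (hG x (interior_subset hx)).hasDerivWithinAt)
      (fun x hx => mul_nonpos_of_nonpos_of_nonneg
        (by linarith [hf' x (interior_subset hx)]) (exp_pos _).le)
  intro x hx
  have hGx : G x ≤ G a := hG_anti ⟨le_rfl, hx.1.trans hx.2⟩ hx hx.1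
  have h_exp : ∀ η, exp (∫ t in η..x, B t) = exp (I x) * exp (-I η) := fun η => by
    rw [← exp_add, ← sub_eq_add_neg,
      integral_interval_sub_left (hB.intervalIntegrable a x) (hB.intervalIntegrable a η)]
  calc f x = exp (I x) * (f x * exp (-I x)) := by
        rw [mul_left_comm, ← exp_add, add_neg_cancel, exp_zero, mul_one]
    _ ≤ exp (I x) * (f a + A * ∫ η in a..x, exp (-I η)) := by
        gcongr
        simpa [G, I] using hGx
    _ = linearGronwallBound B a (f a) A x := by
        have hIa : I a = 0 := integral_same
        simp only [linearGronwallBound, h_exp, intervalIntegral.integral_const_mul, hIa,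
          neg_zero, exp_zero]
        ring

theorem le_linearGronwallBound {f f' B : ℝ → ℝ} {a b A : ℝ} (hB : ContinuousOn B (Icc a b))
    (hf : ∀ x ∈ Icc a b, HasDerivAt f (f' x) x)
    (hf' : ∀ x ∈ Icc a b, f' x ≤ B x * f x + A) :
    ∀ x ∈ Icc a b, f x ≤ linearGronwallBound B a (f a) A x := by
  intro x hx
  have hab : a ≤ b := hx.1.trans hx.2
  set B' : ℝ → ℝ := fun t => B (projIcc a b hab t)
  have hB' : Continuous B' :=
    hB.comp_continuous (continuous_subtype_val.comp continuous_projIcc) fun t => Subtype.mem _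
  have hBB' : EqOn B' B (Icc a b) := fun t ht => by simp [B', projIcc_of_mem hab ht]
  have h := le_linearGronwallBound_of_continuous hB' hf
    (fun y hy => (hBB' hy).symm ▸ hf' y hy) x hx
  rwa [linearGronwallBound_congr hx.1 (hBB'.mono (Icc_subset_Icc_right hx.2))] at h

lemma hasDerivAt_sqrt_energy {ε σ : ℝ → ℝ} {ε' σ' β δ x : ℝ} (hβ : 0 ≤ β) (hδ : δ ≠ 0)
    (hε : HasDerivAt ε ε' x) (hσ : HasDerivAt σ σ' x) :
    HasDerivAt (fun y => √(ε y ^ 2 + β * σ y ^ 2 + δ ^ 2))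
      ((ε x * ε' + β * (σ x * σ')) / √(ε x ^ 2 + β * σ x ^ 2 + δ ^ 2)) x := by
  have hV : 0 < ε x ^ 2 + β * σ x ^ 2 + δ ^ 2 := by positivity
  have hV' := ((hε.fun_pow 2).fun_add ((hσ.fun_pow 2).const_mul β)).add_const (δ ^ 2)
  refine ((hasDerivAt_sqrt hV.ne').comp x hV').congr_deriv ?_
  field_simp
  ring

lemma abs_mul_le_div_sqrt {β e s : ℝ} (hβ : 0 < β) :
    |e * s| ≤ (e ^ 2 + β * s ^ 2) / (2 * √β) := by
  have hsβ := sqrt_pos.2 hβ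
  rw [le_div_iff₀ (by positivity), abs_mul]
  nlinarith [sq_nonneg (|e| - √β * |s|), sq_abs e, sq_abs s, sq_sqrt hβ.le]

lemma energy_rate_le {β c k n N₀ A e s W : ℝ} (hβ : 0 < β) (hc : 0 ≤ c) (hW : 0 < W)
    (hes : e ^ 2 + β * s ^ 2 ≤ W ^ 2) (hA : c * √β * |n - N₀| ≤ A) :
    (e * (-k * s) + β * (s * (c * (n - N₀ + n * e)))) / W ≤
      |β * c * n - k| / (2 * √β) * W + A := by
  have h_es : |e * s| ≤ W ^ 2 / (2 * √β) :=
    (abs_mul_le_div_sqrt hβ).trans (by gcongr)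
  have h_s : √β * |s| ≤ W := by
    have : (√β * |s|) ^ 2 ≤ W ^ 2 := by
      rw [mul_pow, sq_sqrt hβ.le, sq_abs]; nlinarith [sq_nonneg e]
    exact (pow_le_pow_iff_left₀ (by positivity) hW.le two_ne_zero).1 this
  have h_prod : ∀ x y : ℝ, x * y ≤ |x| * |y| := fun x y => (le_abs_self _).trans (abs_mul _ _).le
  rw [div_le_iff₀ hW]
  calc e * (-k * s) + β * (s * (c * (n - N₀ + n * e)))
      = e * s * (β * c * n - k) + c * β * ((n - N₀) * s) := by ring
    _ ≤ |e * s| * |β * c * n - k| + c * β * (|n - N₀| * |s|) := by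
        have hcβ : 0 ≤ c * β := by positivity
        exact add_le_add (h_prod _ _) (mul_le_mul_of_nonneg_left (h_prod _ _) hcβ)
    _ = |e * s| * |β * c * n - k| + (c * √β * |n - N₀|) * (√β * |s|) := by
        linear_combination (c * |n - N₀| * |s|) * (mul_self_sqrt hβ.le).symm
    _ ≤ W ^ 2 / (2 * √β) * |β * c * n - k| + A * W := by
        have hA₀ : 0 ≤ A := (by positivity : 0 ≤ c * √β * |n - N₀|).trans hA
        gcongr
    _ = (|β * c * n - k| / (2 * √β) * W + A) * W := by ring

theorem sqrt_energy_le_linearGronwallBound {a b β c N₀ A δ : ℝ} {κ n ε σ B : ℝ → ℝ}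
    (hβ : 0 < β) (hc : 0 ≤ c) (hδ : δ ≠ 0) (hB_cont : ContinuousOn B (Icc a b))
    (hB : ∀ x ∈ Icc a b, |β * c * n x - κ x| / (2 * √β) ≤ B x)
    (hε : ∀ x ∈ Icc a b, HasDerivAt ε (-(κ x) * σ x) x)
    (hσ : ∀ x ∈ Icc a b, HasDerivAt σ (c * (n x - N₀ + n x * ε x)) x)
    (hA : ∀ x ∈ Icc a b, c * √β * |n x - N₀| ≤ A) :
    ∀ x ∈ Icc a b, √(ε x ^ 2 + β * σ x ^ 2 + δ ^ 2) ≤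
      linearGronwallBound B a √(ε a ^ 2 + β * σ a ^ 2 + δ ^ 2) A x := by
  refine le_linearGronwallBound hB_cont
    (fun x hx => hasDerivAt_sqrt_energy hβ.le hδ (hε x hx) (hσ x hx)) fun x hx => ?_
  have hW : 0 < √(ε x ^ 2 + β * σ x ^ 2 + δ ^ 2) := sqrt_pos.2 (by positivity)
  refine (energy_rate_le hβ hc hW ?_ (hA x hx)).trans ?_
  · rw [sq_sqrt (by positivity)]
    exact le_add_of_nonneg_right (sq_nonneg δ)
  · gcongr
    exact hB x hx

theorem jacobian_deviation_bound_general
    (L K l β N₀ A : ℝ) (hK : 0 < K) (hl : 0 < l) (hβ : 0 < β)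
    (κ nCheck : ℝ → ℝ)
    (hκ_cont : ContinuousOn κ (Set.Icc (0:ℝ) L))
    (hnCheck_cont : ContinuousOn nCheck (Set.Icc (0:ℝ) L))
    (ε σ : ℝ → ℝ)
    (hε0 : ε 0 = 0) (hσ0 : σ 0 = 0)
    (hε' : ∀ ξ ∈ Set.Icc (0:ℝ) L, HasDerivAt ε (-(κ ξ) * σ ξ) ξ)
    (hσ' : ∀ ξ ∈ Set.Icc (0:ℝ) L,
      HasDerivAt σ (K * l * (nCheck ξ - N₀ + nCheck ξ * ε ξ)) ξ)
    (hA : ∀ ξ ∈ Set.Icc (0:ℝ) L, K * l * Real.sqrt β * |nCheck ξ - N₀| ≤ A) :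
    ∀ ξ ∈ Set.Icc (0:ℝ) L,
      |ε ξ| ≤ A * ∫ η in (0:ℝ)..ξ,
        Real.exp (∫ ζ in η..ξ, |β * K * l * nCheck ζ - κ ζ| / (2 * Real.sqrt β)) := by
  intro ξ hξ
  set B : ℝ → ℝ := fun ζ => |β * K * l * nCheck ζ - κ ζ| / (2 * √β)
  have hB_cont : ContinuousOn B (Icc 0 L) :=
    ((continuousOn_const.mul hnCheck_cont).sub hκ_cont).abs.div_const _
  have h_energy : ∀ δ > 0, |ε ξ| ≤ linearGronwallBound B 0 δ A ξ := fun δ hδ => by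
    have h := sqrt_energy_le_linearGronwallBound hβ (mul_pos hK hl).le hδ.ne' hB_cont
      (fun _ _ => by simp only [B, mul_assoc, le_refl]) hε' hσ' hA ξ hξ
    have h_init : √((0:ℝ) ^ 2 + β * 0 ^ 2 + δ ^ 2) = δ := by simp [sqrt_sq hδ.le]
    rw [hε0, hσ0, h_init] at h
    exact (abs_le_sqrt (le_add_of_le_of_nonneg (le_add_of_nonneg_right (by positivity))
      (sq_nonneg δ))).trans h
  have h_lim := ((continuous_linearGronwallBound_initial B 0 A ξ).tendsto 0).mono_left
    (nhdsWithin_le_nhds (s := Ioi 0))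
  simpa [linearGronwallBound] using ge_of_tendsto h_lim (eventually_nhdsWithin_of_forall h_energy)

/-- Bound on the Jacobian deviation `ε = J − 1` obtained from the Liapunov
function `V = ε² + β σ²` and the square-root Gronwall estimate. -/
theorem jacobian_deviation_bound
    (L K l β N₀ A : ℝ) (hL : 0 < L) (hK : 0 < K) (hl : 0 < l) (hβ : 0 < β)
    (κ nCheck : ℝ → ℝ)
    (hκ_cont : ContinuousOn κ (Set.Icc (0:ℝ) L))
    (hnCheck_cont : ContinuousOn nCheck (Set.Icc (0:ℝ) L))
    (hκ_nonneg : ∀ ξ ∈ Set.Icc (0:ℝ) L, 0 ≤ κ ξ)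
    (ε σ : ℝ → ℝ)
    (hε0 : ε 0 = 0) (hσ0 : σ 0 = 0)
    (hε' : ∀ ξ ∈ Set.Icc (0:ℝ) L, HasDerivAt ε (-(κ ξ) * σ ξ) ξ)
    (hσ' : ∀ ξ ∈ Set.Icc (0:ℝ) L,
      HasDerivAt σ (K * l * (nCheck ξ - N₀ + nCheck ξ * ε ξ)) ξ)
    (hA : ∀ ξ ∈ Set.Icc (0:ℝ) L, K * l * Real.sqrt β * |nCheck ξ - N₀| ≤ A) :
    ∀ ξ ∈ Set.Icc (0:ℝ) L,
      |ε ξ| ≤ A * ∫ η in (0:ℝ)..ξ,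
        Real.exp (∫ ζ in η..ξ, |β * K * l * nCheck ζ - κ ζ| / (2 * Real.sqrt β)) :=
  jacobian_deviation_bound_general L K l β N₀ A hK hl hβ κ nCheck hκ_cont hnCheck_cont ε σ hε0 hσ0
    hε' hσ' hA
end

section
/- Let L > 0, K > 0, l > 0, β > 0, let κ, ň : [0, L] → ℝ be continuous with κ ≥ 0, and N₀ ∈ ℝ. Let ε, σ : [0, L] → ℝ be differentiable with ε(0) = σ(0) = 0, ε'(ξ) = −κ(ξ) σ(ξ), and σ'(ξ) = K l (ň(ξ) − N₀ + ň(ξ) ε(ξ)) on [0, L]. Define B(ξ) := |β K l ň(ξ) − κ(ξ)|/(2√β) and let A ≥ K l √β · sup_{ξ ∈ [0,L]} |ň(ξ) − N₀|. If A ∫₀^L exp(∫_η^L B(ζ) dζ) dη < 1, then 1 + ε(ξ) > 0 for all ξ ∈ [0, L]. -/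
/-!
For `c ≠ 0` the regularised energy `r = √(ε² + βσ² + c²)` is differentiable, and along the
system `r r' = ε ε' + β σ σ'`; splitting this as `εσ (βKlň - κ) + (Kl√β (ň - N₀)) (√β σ)` and
using `2√β |εσ| ≤ ε² + βσ² ≤ r²` gives `r' ≤ B r + A`. Gronwall's inequality with the variable
rate `B` bounds `|ε ξ| ≤ r ξ` by `|c| e^{∫₀^ξ B} + A ∫₀^ξ e^{∫_η^ξ B} dη`. Letting `c → 0`, and
enlarging `ξ` to `L` (possible since `B ≥ 0`), gives `|ε| < 1`.
-/

open MeasureTheory intervalIntegral Real Set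

theorem ContinuousOn.hasDerivAt_integral_of_mem_Ioo {E : Type*} [NormedAddCommGroup E]
    [NormedSpace ℝ E] [CompleteSpace E] {f : ℝ → E} {a b x : ℝ}
    (hf : ContinuousOn f (Icc a b)) (hx : x ∈ Ioo a b) :
    HasDerivAt (fun y => ∫ t in a..y, f t) (f x) x :=
  integral_hasDerivAt_right
    ((hf.mono (Icc_subset_Icc_right hx.2.le)).intervalIntegrable_of_Icc hx.1.le)
    ((hf.mono Ioo_subset_Icc_self).stronglyMeasurableAtFilter isOpen_Ioo x hx)
    (hf.continuousAt (Icc_mem_nhds hx.1 hx.2))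

theorem ContinuousOn.continuousOn_integral {E : Type*} [NormedAddCommGroup E]
    [NormedSpace ℝ E] {f : ℝ → E} {a b : ℝ} (hab : a ≤ b) (hf : ContinuousOn f (Icc a b)) :
    ContinuousOn (fun y => ∫ t in a..y, f t) (Icc a b) := by
  have := continuousOn_primitive_interval (μ := volume) (f := f) (a := a) (b := b)
    (by rw [uIcc_of_le hab]; exact hf.integrableOn_Icc)
  rwa [uIcc_of_le hab] at this

theorem le_exp_integral_of_hasDerivAt_le_mul_add {u u' b g : ℝ → ℝ} {a T : ℝ}
    (hb : ContinuousOn b (Icc a T)) (hg : ContinuousOn g (Icc a T))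
    (hu : ContinuousOn u (Icc a T)) (hu' : ∀ x ∈ Ioo a T, HasDerivAt u (u' x) x)
    (hle : ∀ x ∈ Ioo a T, u' x ≤ b x * u x + g x) {x : ℝ} (hx : x ∈ Icc a T) :
    u x ≤ u a * exp (∫ t in a..x, b t) + ∫ t in a..x, g t * exp (∫ s in t..x, b s) := by
  have haT : a ≤ T := hx.1.trans hx.2
  set Φ : ℝ → ℝ := fun y => ∫ t in a..y, b t
  have hΦ : ContinuousOn Φ (Icc a T) := hb.continuousOn_integral haT
  have hh : ContinuousOn (fun t => g t * exp (-Φ t)) (Icc a T) := hg.mul hΦ.neg.rexp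
  set G : ℝ → ℝ := fun y => u y * exp (-Φ y) - ∫ t in a..y, g t * exp (-Φ t)
  have hG : AntitoneOn G (Icc a T) := by
    refine antitoneOn_of_hasDerivWithinAt_nonpos (convex_Icc a T)
      ((hu.mul hΦ.neg.rexp).sub (hh.continuousOn_integral haT))
      (f' := fun y => (u' y - (b y * u y + g y)) * exp (-Φ y)) ?_ ?_ <;>
      rw [interior_Icc] <;> intro y hy
    · have hΦ' : HasDerivAt Φ (b y) y := hb.hasDerivAt_integral_of_mem_Ioo hy
      refine (((hu' y hy).mul hΦ'.neg.exp).sub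
        (hh.hasDerivAt_integral_of_mem_Ioo hy)).hasDerivWithinAt.congr_deriv ?_
      simp only [Pi.neg_apply]
      ring
    · exact mul_nonpos_of_nonpos_of_nonneg (sub_nonpos.2 (hle y hy)) (exp_pos _).le
  have hGx : G x ≤ u a := by
    simpa [G, Φ] using hG ⟨le_rfl, haT⟩ hx hx.1
  have hint : ∫ t in a..x, g t * exp (∫ s in t..x, b s)
      = (∫ t in a..x, g t * exp (-Φ t)) * exp (Φ x) := by
    rw [← intervalIntegral.integral_mul_const]
    refine integral_congr fun t ht => ?_
    rw [uIcc_of_le hx.1] at ht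
    have hbi : ∀ y ∈ Icc a T, IntervalIntegrable b volume a y := fun y hy =>
      (hb.mono (Icc_subset_Icc_right hy.2)).intervalIntegrable_of_Icc hy.1
    rw [← integral_interval_sub_left (hbi x hx) (hbi t ⟨ht.1, ht.2.trans hx.2⟩), sub_eq_neg_add,
      exp_add]
    ring
  calc u x = u x * exp (-Φ x) * exp (Φ x) := by
        rw [mul_assoc, ← exp_add, neg_add_cancel, exp_zero, mul_one]
    _ ≤ (u a + ∫ t in a..x, g t * exp (-Φ t)) * exp (Φ x) := by
        gcongr
        linarith [hGx]
    _ = _ := by rw [hint]; ring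

theorem integral_mono_interval_of_forall_nonneg {f : ℝ → ℝ} {a b c d : ℝ} (hca : c ≤ a)
    (hab : a ≤ b) (hbd : b ≤ d) (hf : IntervalIntegrable f volume c d)
    (hf0 : ∀ t ∈ Icc c d, 0 ≤ f t) :
    ∫ t in a..b, f t ≤ ∫ t in c..d, f t :=
  integral_mono_interval hca hab hbd
    (ae_restrict_of_forall_mem measurableSet_Ioc fun t ht => hf0 t (Ioc_subset_Icc_self ht)) hf

theorem integral_exp_integral_le_of_nonneg {B : ℝ → ℝ} {a x y : ℝ} (hax : a ≤ x) (hxy : x ≤ y)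
    (hB : IntervalIntegrable B volume a y) (hB0 : ∀ ζ ∈ Icc a y, 0 ≤ B ζ) :
    ∫ η in a..x, exp (∫ ζ in η..x, B ζ) ≤ ∫ η in a..y, exp (∫ ζ in η..y, B ζ) := by
  have hanti : ∀ z ∈ Icc a y, AntitoneOn (fun η => exp (∫ ζ in η..z, B ζ)) (Icc a z) :=
    fun z hz η hη η' hη' hηη' => exp_le_exp.2 <|
      integral_mono_interval_of_forall_nonneg hηη' hη'.2 le_rfl
        (hB.mono_set (uIcc_subset_uIcc (Icc_subset_uIcc ⟨hη.1, hη.2.trans hz.2⟩)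
          (Icc_subset_uIcc hz)))
        fun ζ hζ => hB0 ζ ⟨hη.1.trans hζ.1, hζ.2.trans hz.2⟩
  have hint : ∀ z ∈ Icc a y,
      IntervalIntegrable (fun η => exp (∫ ζ in η..z, B ζ)) volume a z := fun z hz =>
    AntitoneOn.intervalIntegrable (by rw [uIcc_of_le hz.1]; exact hanti z hz)
  have hx : x ∈ Icc a y := ⟨hax, hxy⟩
  have hy : y ∈ Icc a y := ⟨hax.trans hxy, le_rfl⟩
  calc ∫ η in a..x, exp (∫ ζ in η..x, B ζ)
      ≤ ∫ η in a..x, exp (∫ ζ in η..y, B ζ) :=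
        integral_mono_on hax (hint x hx)
          ((hint y hy).mono_set (uIcc_subset_uIcc_left (Icc_subset_uIcc hx))) fun η hη =>
          exp_le_exp.2 <| integral_mono_interval_of_forall_nonneg le_rfl hη.2 hxy
            (hB.mono_set (uIcc_subset_uIcc_right (Icc_subset_uIcc ⟨hη.1, hη.2.trans hxy⟩)))
            fun ζ hζ => hB0 ζ ⟨hη.1.trans hζ.1, hζ.2⟩
    _ ≤ ∫ η in a..y, exp (∫ ζ in η..y, B ζ) :=
        integral_mono_interval_of_forall_nonneg le_rfl hax hxy (hint y hy) fun _ _ => (exp_pos _).le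

theorem energy_rate_le_s15 {β e s k m d n R : ℝ} (hβ : 0 < β) (hR : e ^ 2 + β * s ^ 2 ≤ R ^ 2)
    (hR0 : 0 ≤ R) :
    e * (-k * s) + β * (s * (m * (d + n * e)))
      ≤ |β * m * n - k| / (2 * √β) * R ^ 2 + |m| * √β * |d| * R := by
  have hsβ : 0 < √β := sqrt_pos.2 hβ
  have hsq : √β ^ 2 = β := sq_sqrt hβ.le
  have hes : |e * s| ≤ R ^ 2 / (2 * √β) := by
    rw [le_div_iff₀ (by positivity), abs_mul]
    nlinarith [sq_nonneg (|e| - √β * |s|), sq_abs e, sq_abs s]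
  have hs : |√β * s| ≤ R := by
    refine abs_le_of_sq_le_sq ?_ hR0
    nlinarith [sq_nonneg e]
  calc e * (-k * s) + β * (s * (m * (d + n * e)))
      = e * s * (β * m * n - k) + m * √β * d * (√β * s) := by
        linear_combination (-(s * m * d)) * hsq
    _ ≤ |e * s| * |β * m * n - k| + |m| * √β * |d| * |√β * s| := by
        gcongr ?_ + ?_
        · exact (le_abs_self _).trans (abs_mul _ _).le
        · exact (le_abs_self _).trans_eq (by rw [abs_mul, abs_mul, abs_mul, abs_of_pos hsβ])
    _ ≤ R ^ 2 / (2 * √β) * |β * m * n - k| + |m| * √β * |d| * R := by gcongr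
    _ = _ := by ring

theorem HasDerivAt.sqrt_energy {ε σ : ℝ → ℝ} {ε' σ' β c x : ℝ} (hβ : 0 ≤ β) (hc : c ≠ 0)
    (hε : HasDerivAt ε ε' x) (hσ : HasDerivAt σ σ' x) :
    HasDerivAt (fun y => √(ε y ^ 2 + β * σ y ^ 2 + c ^ 2))
      ((ε x * ε' + β * (σ x * σ')) / √(ε x ^ 2 + β * σ x ^ 2 + c ^ 2)) x := by
  have hE : HasDerivAt (fun y => ε y ^ 2 + β * σ y ^ 2 + c ^ 2)
      (2 * (ε x * ε' + β * (σ x * σ'))) x :=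
    (((hε.pow 2).add ((hσ.pow 2).const_mul β)).add_const (c ^ 2)).congr_deriv (by ring)
  convert hE.sqrt (by positivity) using 1
  field_simp

theorem abs_le_mul_integral_exp_integral {L K l β N₀ A : ℝ} {κ n ε σ : ℝ → ℝ} (hβ : 0 < β)
    (hκ : ContinuousOn κ (Icc 0 L)) (hn : ContinuousOn n (Icc 0 L))
    (hε0 : ε 0 = 0) (hσ0 : σ 0 = 0)
    (hε' : ∀ ξ ∈ Icc 0 L, HasDerivAt ε (-(κ ξ) * σ ξ) ξ)
    (hσ' : ∀ ξ ∈ Icc 0 L, HasDerivAt σ (K * l * (n ξ - N₀ + n ξ * ε ξ)) ξ)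
    (hA : ∀ ξ ∈ Icc 0 L, |K * l| * √β * |n ξ - N₀| ≤ A) {ξ : ℝ} (hξ : ξ ∈ Icc 0 L) :
    |ε ξ| ≤ A * ∫ η in 0..ξ, exp (∫ ζ in η..ξ, |β * K * l * n ζ - κ ζ| / (2 * √β)) := by
  set B : ℝ → ℝ := fun ζ => |β * K * l * n ζ - κ ζ| / (2 * √β)
  have hB : ContinuousOn B (Icc 0 L) := ((continuousOn_const.mul hn).sub hκ).abs.div_const _
  set r : ℝ → ℝ → ℝ := fun c y => √(ε y ^ 2 + β * σ y ^ 2 + c ^ 2)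
  have hr : ∀ c ≠ 0, |ε ξ| ≤
      |c| * exp (∫ ζ in 0..ξ, B ζ) + A * ∫ η in 0..ξ, exp (∫ ζ in η..ξ, B ζ) := by
    intro c hc
    have hr' : ∀ y ∈ Icc 0 L, HasDerivAt (r c) _ y := fun y hy =>
      (hε' y hy).sqrt_energy hβ.le hc (hσ' y hy)
    calc |ε ξ| ≤ r c ξ := abs_le_sqrt (by nlinarith [sq_nonneg (σ ξ), sq_nonneg c])
      _ ≤ r c 0 * exp (∫ ζ in 0..ξ, B ζ) + ∫ η in 0..ξ, A * exp (∫ ζ in η..ξ, B ζ) :=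
        le_exp_integral_of_hasDerivAt_le_mul_add hB continuousOn_const
          (fun y hy => (hr' y hy).continuousAt.continuousWithinAt)
          (fun y hy => hr' y (Ioo_subset_Icc_self hy)) (fun y hy => ?_) hξ
      _ = _ := by simp [r, hε0, hσ0, sqrt_sq_eq_abs, intervalIntegral.integral_const_mul]
    have hy' := Ioo_subset_Icc_self hy
    have hrpos : 0 < r c y := sqrt_pos.2 (by positivity)
    have hBy : B y = |β * (K * l) * n y - κ y| / (2 * √β) := by simp only [B, mul_assoc]
    rw [div_le_iff₀ hrpos, hBy]
    calc _ ≤ _ := energy_rate_le_s15 (k := κ y) (d := n y - N₀) hβ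
          (by rw [sq_sqrt (by positivity)]; nlinarith [sq_nonneg c]) hrpos.le
      _ ≤ _ := by linarith [mul_le_mul_of_nonneg_right (hA y hy') hrpos.le]
  refine le_of_forall_pos_le_add fun δ hδ => ?_
  have hE := exp_pos (∫ ζ in 0..ξ, B ζ)
  simpa [abs_of_pos (div_pos hδ hE), div_mul_cancel₀ δ hE.ne', add_comm]
    using hr (δ / exp (∫ ζ in 0..ξ, B ζ)) (div_pos hδ hE).ne'

theorem no_wave_breaking_general
    (L K l β N₀ A : ℝ) (hK : 0 < K) (hl : 0 < l) (hβ : 0 < β)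
    (κ nCheck : ℝ → ℝ)
    (hκ_cont : ContinuousOn κ (Set.Icc (0:ℝ) L))
    (hnCheck_cont : ContinuousOn nCheck (Set.Icc (0:ℝ) L))
    (ε σ : ℝ → ℝ)
    (hε0 : ε 0 = 0) (hσ0 : σ 0 = 0)
    (hε' : ∀ ξ ∈ Set.Icc (0:ℝ) L, HasDerivAt ε (-(κ ξ) * σ ξ) ξ)
    (hσ' : ∀ ξ ∈ Set.Icc (0:ℝ) L,
      HasDerivAt σ (K * l * (nCheck ξ - N₀ + nCheck ξ * ε ξ)) ξ)
    (hA : ∀ ξ ∈ Set.Icc (0:ℝ) L, K * l * Real.sqrt β * |nCheck ξ - N₀| ≤ A)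
    (hQ : A * (∫ η in (0:ℝ)..L,
        Real.exp (∫ ζ in η..L, |β * K * l * nCheck ζ - κ ζ| / (2 * Real.sqrt β))) < 1) :
    ∀ ξ ∈ Set.Icc (0:ℝ) L, 0 < 1 + ε ξ := by
  intro ξ hξ
  have hKl : |K * l| = K * l := abs_of_pos (mul_pos hK hl)
  have hA0 : 0 ≤ A := (by positivity : 0 ≤ K * l * √β * |nCheck ξ - N₀|).trans (hA ξ hξ)
  have hgronwall := abs_le_mul_integral_exp_integral hβ hκ_cont hnCheck_cont hε0 hσ0 hε' hσ'
    (by simpa only [hKl] using hA) hξ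
  have hmono := integral_exp_integral_le_of_nonneg
    (B := fun ζ => |β * K * l * nCheck ζ - κ ζ| / (2 * √β)) hξ.1 hξ.2
    ((((continuousOn_const.mul hnCheck_cont).sub hκ_cont).abs.div_const _).intervalIntegrable_of_Icc
      (hξ.1.trans hξ.2)) fun ζ _ => by positivity
  have hε_lt : |ε ξ| < 1 :=
    hgronwall.trans_lt ((mul_le_mul_of_nonneg_left hmono hA0).trans_lt hQ)
  linarith [neg_abs_le (ε ξ)]

/-- Theorem 1 of the paper (no wave-breaking during the laser-plasma
interaction): if the Gronwall bound on `|ε|` at `ξ = L` is `< 1`, then the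
Jacobian `J = 1 + ε` stays positive on `[0, L]`. -/
theorem no_wave_breaking
    (L K l β N₀ A : ℝ) (hL : 0 < L) (hK : 0 < K) (hl : 0 < l) (hβ : 0 < β)
    (κ nCheck : ℝ → ℝ)
    (hκ_cont : ContinuousOn κ (Set.Icc (0:ℝ) L))
    (hnCheck_cont : ContinuousOn nCheck (Set.Icc (0:ℝ) L))
    (hκ_nonneg : ∀ ξ ∈ Set.Icc (0:ℝ) L, 0 ≤ κ ξ)
    (ε σ : ℝ → ℝ)
    (hε0 : ε 0 = 0) (hσ0 : σ 0 = 0)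
    (hε' : ∀ ξ ∈ Set.Icc (0:ℝ) L, HasDerivAt ε (-(κ ξ) * σ ξ) ξ)
    (hσ' : ∀ ξ ∈ Set.Icc (0:ℝ) L,
      HasDerivAt σ (K * l * (nCheck ξ - N₀ + nCheck ξ * ε ξ)) ξ)
    (hA : ∀ ξ ∈ Set.Icc (0:ℝ) L, K * l * Real.sqrt β * |nCheck ξ - N₀| ≤ A)
    (hQ : A * (∫ η in (0:ℝ)..L,
        Real.exp (∫ ζ in η..L, |β * K * l * nCheck ζ - κ ζ| / (2 * Real.sqrt β))) < 1) :
    ∀ ξ ∈ Set.Icc (0:ℝ) L, 0 < 1 + ε ξ :=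
  no_wave_breaking_general L K l β N₀ A hK hl hβ κ nCheck hκ_cont hnCheck_cont ε σ hε0 hσ0 hε' hσ'
    hA hQ
end

section
/- Let p, n̄, Δ_u, Z̄ > 0 and define q : ℝ → ℝ by q(z) = (n̄/p)(z/Z̄) for z ≥ 0 and q(z) = 0 for z < 0. If Z̄ > n̄ Δ_u / (2p), then for every Z ∈ [0, Z̄]: q(Z + Δ_u) < 1 + q(Z) + √(1 + 2 q(Z)). -/
open Real Set

/-- The linear density ramp `q(z) = (n̄/p)(z/Z̄) θ(z)` fulfills the
nonrelativistic no-wave-breaking condition (NR-NoWBcond2) for all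
`Z ∈ [0, Z̄]` provided `Z̄ > n̄ Δ_u/(2p)`. -/
theorem linear_ramp_noWB
    (p nbar Δu Zbar : ℝ) (hp : 0 < p) (hn : 0 < nbar) (hΔ : 0 < Δu)
    (hZbar : 0 < Zbar)
    (q : ℝ → ℝ)
    (hq : ∀ z : ℝ, q z = if 0 ≤ z then (nbar / p) * (z / Zbar) else 0)
    (hcond : Zbar > nbar * Δu / (2 * p)) :
    ∀ Z ∈ Set.Icc (0:ℝ) Zbar,
      q (Z + Δu) < 1 + q Z + Real.sqrt (1 + 2 * q Z) := by
  intro Z hZ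
  obtain ⟨hZ0, hZb⟩ := hZ
  have hqZ : q Z = (nbar / p) * (Z / Zbar) := by rw [hq]; simp [hZ0]
  have hqZ' : q (Z + Δu) = (nbar / p) * ((Z + Δu) / Zbar) := by
    rw [hq]; simp [le_of_lt (by linarith : (0:ℝ) < Z + Δu)]
  have hqZnn : 0 ≤ q Z := by
    rw [hqZ]
    positivity
  have hsqrt : 1 ≤ Real.sqrt (1 + 2 * q Z) := by
    have h := Real.sqrt_le_sqrt (show (1:ℝ) ≤ 1 + 2 * q Z by linarith)
    simpa using h
  have hstep : (nbar / p) * (Δu / Zbar) < 2 := by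
    rw [div_mul_div_comm, div_lt_iff₀ (by positivity)]
    have := (div_lt_iff₀ (by positivity : (0:ℝ) < 2 * p)).mp hcond
    nlinarith
  have : q (Z + Δu) = q Z + (nbar / p) * (Δu / Zbar) := by
    rw [hqZ, hqZ']; ring
  rw [this]
  linarith
end

section
/- Let f : ℝ → ℂ be twice continuously differentiable with f, f' and f'' integrable on ℝ, and let k be a nonzero real number. Then for every ξ ∈ ℝ: | ∫_{−∞}^ξ f(ζ) e^{i k ζ} dζ + (i/k) f(ξ) e^{i k ξ} | ≤ (1/k²) ( |f'(ξ)| + ∫_{−∞}^ξ |f''(ζ)| dζ ). -/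
open MeasureTheory Real Complex

/-! Integrating by parts against `e^{ikζ} = (ik)⁻¹ (e^{ikζ})'` on `(-∞, ξ]` turns
`∫ g e^{ikζ}` into `-(i/k) g(ξ) e^{ikξ} + (i/k) ∫ g' e^{ikζ}`; the boundary term at `-∞`
vanishes because a function that is integrable together with its derivative on a half-line
tends to zero there. Doing this for `g = f` and then for `g = f'` expresses the remainder as
`k⁻² (f'(ξ) e^{ikξ} - ∫ f'' e^{ikζ})`, and `|e^{ikζ}| = 1` gives the bound. -/

lemma hasDerivAt_exp_I_mul_ofReal_mul (k x : ℝ) :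
    HasDerivAt (fun ζ : ℝ => Complex.exp (I * (k * ζ : ℝ)))
      (I * k * Complex.exp (I * (k * x : ℝ))) x := by
  have hphase : HasDerivAt (fun ζ : ℝ => I * ((k * ζ : ℝ) : ℂ)) (I * k) x := by
    simpa using (((hasDerivAt_id x).const_mul k).ofReal_comp).const_mul I
  simpa [mul_comm] using hphase.cexp

lemma MeasureTheory.IntegrableOn.mul_exp_I_mul_ofReal_mul {g : ℝ → ℂ} {s : Set ℝ}
    (hg : IntegrableOn g s) (k : ℝ) :
    IntegrableOn (fun ζ : ℝ => g ζ * Complex.exp (I * (k * ζ : ℝ))) s := by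
  refine hg.mul_bdd (c := 1) (by fun_prop) (Filter.Eventually.of_forall fun ζ => ?_)
  rw [Complex.norm_exp_I_mul_ofReal]

lemma norm_integral_mul_exp_I_mul_ofReal_mul_le (g : ℝ → ℂ) (s : Set ℝ) (k : ℝ) :
    ‖∫ ζ in s, g ζ * Complex.exp (I * (k * ζ : ℝ))‖ ≤ ∫ ζ in s, ‖g ζ‖ :=
  (norm_integral_le_integral_norm _).trans_eq <| integral_congr_ae <|
    Filter.Eventually.of_forall fun ζ => by
      simp only [norm_mul, Complex.norm_exp_I_mul_ofReal, mul_one]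

lemma integral_Iic_mul_exp_I_mul_ofReal_mul_add_boundary_eq {g g' : ℝ → ℂ} {ξ : ℝ}
    (hg : ∀ x ∈ Set.Iic ξ, HasDerivAt g (g' x) x)
    (hg_int : IntegrableOn g (Set.Iic ξ)) (hg'_int : IntegrableOn g' (Set.Iic ξ))
    {k : ℝ} (hk : k ≠ 0) :
    (∫ ζ in Set.Iic ξ, g ζ * Complex.exp (I * (k * ζ : ℝ)))
        + (I / k) * g ξ * Complex.exp (I * (k * ξ : ℝ))
      = (I / k) * ∫ ζ in Set.Iic ξ, g' ζ * Complex.exp (I * (k * ζ : ℝ)) := by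
  set e : ℝ → ℂ := fun ζ => Complex.exp (I * (k * ζ : ℝ))
  have hge_deriv : ∀ x ∈ Set.Iic ξ,
      HasDerivAt (fun ζ => g ζ * e ζ) (g' x * e x + I * k * (g x * e x)) x := fun x hx =>
    ((hg x hx).mul (hasDerivAt_exp_I_mul_ofReal_mul k x)).congr_deriv (by ring)
  have hge_int := hg_int.mul_exp_I_mul_ofReal_mul k
  have hg'e_int := hg'_int.mul_exp_I_mul_ofReal_mul k
  have hsum_int := hg'e_int.add (hge_int.const_mul (I * k))
  have hftc := integral_Iic_of_hasDerivAt_of_tendsto' hge_deriv hsum_int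
    (tendsto_zero_of_hasDerivAt_of_integrableOn_Iic hge_deriv hsum_int hge_int)
  rw [integral_add hg'e_int (hge_int.const_mul _), integral_const_mul, sub_zero] at hftc
  have hk' : (k : ℂ) ≠ 0 := ofReal_ne_zero.mpr hk
  field_simp
  linear_combination (-I) * hftc + (k * ∫ ζ in Set.Iic ξ, g ζ * e ζ) * I_sq

lemma integral_Iic_mul_exp_I_mul_ofReal_mul_add_boundary_eq_second_order {g g' g'' : ℝ → ℂ}
    {ξ : ℝ} (hg : ∀ x ∈ Set.Iic ξ, HasDerivAt g (g' x) x)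
    (hg' : ∀ x ∈ Set.Iic ξ, HasDerivAt g' (g'' x) x) (hg_int : IntegrableOn g (Set.Iic ξ))
    (hg'_int : IntegrableOn g' (Set.Iic ξ)) (hg''_int : IntegrableOn g'' (Set.Iic ξ))
    {k : ℝ} (hk : k ≠ 0) :
    (∫ ζ in Set.Iic ξ, g ζ * Complex.exp (I * (k * ζ : ℝ)))
        + (I / k) * g ξ * Complex.exp (I * (k * ξ : ℝ))
      = (1 / k ^ 2 : ℂ) * (g' ξ * Complex.exp (I * (k * ξ : ℝ))
          - ∫ ζ in Set.Iic ξ, g'' ζ * Complex.exp (I * (k * ζ : ℝ))) := by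
  have hk' : (k : ℂ) ≠ 0 := ofReal_ne_zero.mpr hk
  have hfirst := integral_Iic_mul_exp_I_mul_ofReal_mul_add_boundary_eq hg hg_int hg'_int hk
  have hsecond := integral_Iic_mul_exp_I_mul_ofReal_mul_add_boundary_eq hg' hg'_int hg''_int hk
  rw [hfirst, eq_sub_of_add_eq hsecond]
  field_simp
  linear_combination ((∫ ζ in Set.Iic ξ, g'' ζ * Complex.exp (I * (k * ζ : ℝ)))
    - g' ξ * Complex.exp (I * (k * ξ : ℝ))) * I_sq

/-- Oscillatory-integral estimate from the appendix: double integration by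
parts bounds the remainder of `∫_{−∞}^ξ f(ζ) e^{ikζ} dζ + (i/k) f(ξ) e^{ikξ}`
by `(|f'(ξ)| + ‖f''‖_{L¹(−∞,ξ]})/k²`. -/
theorem oscillatory_integral_remainder_bound
    (f : ℝ → ℂ) (hf : ContDiff ℝ 2 f)
    (hf0 : Integrable f) (hf1 : Integrable (deriv f))
    (hf2 : Integrable (deriv (deriv f)))
    (k : ℝ) (hk : k ≠ 0) (ξ : ℝ) :
    ‖((∫ ζ in Set.Iic ξ, f ζ * Complex.exp (Complex.I * (k * ζ : ℝ)))
        + (Complex.I / (k : ℂ)) * f ξ * Complex.exp (Complex.I * (k * ξ : ℝ)))‖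
      ≤ (1 / k^2) *
        (‖deriv f ξ‖
          + ∫ ζ in Set.Iic ξ, ‖deriv (deriv f) ζ‖) := by
  have hf_deriv x (_ : x ∈ Set.Iic ξ) : HasDerivAt f (deriv f x) x :=
    (hf.differentiable two_ne_zero x).hasDerivAt
  have hf'_deriv x (_ : x ∈ Set.Iic ξ) : HasDerivAt (deriv f) (deriv (deriv f) x) x :=
    ((hf.iterate_deriv' 1 1).differentiable one_ne_zero x).hasDerivAt
  rw [integral_Iic_mul_exp_I_mul_ofReal_mul_add_boundary_eq_second_order hf_deriv hf'_deriv
    hf0.integrableOn hf1.integrableOn hf2.integrableOn hk, norm_mul]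
  have hnorm_coeff : ‖(1 / k ^ 2 : ℂ)‖ = 1 / k ^ 2 := by
    rw [← ofReal_pow, ← ofReal_one, ← ofReal_div, norm_real,
      Real.norm_of_nonneg (by positivity)]
  rw [hnorm_coeff]
  gcongr
  calc _ ≤ ‖deriv f ξ * Complex.exp (I * (k * ξ : ℝ))‖
          + ‖∫ ζ in Set.Iic ξ, deriv (deriv f) ζ * Complex.exp (I * (k * ζ : ℝ))‖ :=
        norm_sub_le _ _
    _ ≤ _ := by
      rw [norm_mul, norm_exp_I_mul_ofReal, mul_one]
      gcongr
      exact norm_integral_mul_exp_I_mul_ofReal_mul_le _ _ k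
end
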